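/- arXiv:1910.05405 — 11 statements merged into one kernel-verified Lean document; each statement's English description precedes it below -/
import Mathlib

section
/- Let f : ℝ^d → ℝ^d be globally Lipschitz and continuously differentiable with Jacobian A(θ) = Df(θ), and suppose the function θ ↦ ‖f(θ)‖ is coercive, i.e., the sublevel set {θ : ‖f(θ)‖ ≤ r} is compact for every r ≥ 0. Let ε > 0 and let w : [0,∞) → ℝ^d be a differentiable solution of the regularized Newton–Raphson flow. Then the trajectory {w(t) : t ≥ 0} is bounded, and lim_{t→∞} A(w(t))ᵀ f(w(t)) = 0. -/
/-! Along the flow, `d/dt ‖f w‖² = -2 ⟪Aᵀf, (εI + AᵀA)⁻¹ Aᵀf⟫ ≤ -2c ‖Aᵀf‖²` with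
`c = ε / (ε + K²)²`, because `‖A‖ ≤ K` bounds `εI + AᵀA` by `ε + K²`. So `‖f (w t)‖` decreases
and the trajectory stays in a compact sublevel set of `‖f‖`. There `Aᵀf` is bounded and uniformly
continuous; as `‖w'‖ ≤ ‖Aᵀf‖ / ε`, `w` is Lipschitz, so `t ↦ A(w t)ᵀ f(w t)` is uniformly
continuous. Its squared norm is dissipated by the bounded-below `‖f w‖²`, hence it tends to `0`
(Barbalat's argument). -/

open Matrix Filter Topology Set
open scoped RealInnerProductSpace InnerProduct

lemma sub_le_mul_sub_of_hasDerivAt_le {D : Set ℝ} (hD : Convex ℝ D) {φ φ' : ℝ → ℝ} {C : ℝ}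
    (hφ : ∀ t ∈ D, HasDerivAt φ (φ' t) t) (hφ' : ∀ t ∈ D, φ' t ≤ C) {x y : ℝ} (hx : x ∈ D)
    (hy : y ∈ D) (hxy : x ≤ y) : φ y - φ x ≤ C * (y - x) :=
  hD.image_sub_le_mul_sub_of_deriv_le (fun t ht ↦ (hφ t ht).continuousAt.continuousWithinAt)
    (fun t ht ↦ (hφ t (interior_subset ht)).differentiableAt.differentiableWithinAt)
    (fun t ht ↦ (hφ t (interior_subset ht)).deriv ▸ hφ' t (interior_subset ht)) x hx y hy hxy

lemma antitoneOn_Ici_of_hasDerivAt_nonpos {φ φ' : ℝ → ℝ} {a : ℝ}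
    (hφ : ∀ t, a ≤ t → HasDerivAt φ (φ' t) t) (hφ' : ∀ t, a ≤ t → φ' t ≤ 0) :
    AntitoneOn φ (Ici a) := fun x hx y hy hxy ↦ by
  linarith [sub_le_mul_sub_of_hasDerivAt_le (convex_Ici a) hφ hφ' hx hy hxy]

lemma exists_tendsto_atTop_of_antitoneOn_Ici {φ : ℝ → ℝ} {a b : ℝ} (hφ : AntitoneOn φ (Ici a))
    (hb : ∀ t, a ≤ t → b ≤ φ t) : ∃ m, Tendsto φ atTop (𝓝 m) := by
  have hanti : Antitone (fun t ↦ φ (max a t)) := fun x y hxy ↦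
    hφ (le_max_left a x) (le_max_left a y) (max_le_max_left a hxy)
  have hbdd : BddBelow (range fun t ↦ φ (max a t)) := ⟨b, by
    rintro _ ⟨t, rfl⟩
    exact hb _ (le_max_left a t)⟩
  refine ⟨_, (tendsto_atTop_ciInf hanti hbdd).congr' ?_⟩
  filter_upwards [eventually_ge_atTop a] with t ht
  rw [max_eq_right ht]

/-- A form of Barbalat's lemma. -/
theorem tendsto_zero_of_hasDerivAt_le_neg_mul_norm_sq {E : Type*} [SeminormedAddCommGroup E]
    {φ φ' : ℝ → ℝ} {g : ℝ → E} {b c : ℝ} (hc : 0 < c)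
    (hφ : ∀ t, 0 ≤ t → HasDerivAt φ (φ' t) t) (hφ' : ∀ t, 0 ≤ t → φ' t ≤ -(c * ‖g t‖ ^ 2))
    (hb : ∀ t, 0 ≤ t → b ≤ φ t) (hg : UniformContinuousOn g (Ici 0)) :
    Tendsto g atTop (𝓝 0) := by
  have hanti := antitoneOn_Ici_of_hasDerivAt_nonpos hφ fun t ht ↦
    (hφ' t ht).trans (neg_nonpos.2 (by positivity))
  obtain ⟨m, hm⟩ := exists_tendsto_atTop_of_antitoneOn_Ici hanti hb
  refine Metric.tendsto_nhds.2 fun δ hδ ↦ ?_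
  obtain ⟨η, hη, hclose⟩ := Metric.uniformContinuousOn_iff.1 hg (δ / 2) (half_pos hδ)
  set β := c * (δ / 2) ^ 2
  have hdrop : Tendsto (fun t ↦ φ t - φ (t + η / 2)) atTop (𝓝 0) := by
    simpa using hm.sub (hm.comp (tendsto_atTop_add_const_right _ _ tendsto_id))
  filter_upwards [hdrop.eventually (gt_mem_nhds (by positivity : 0 < β * (η / 2))),
    eventually_ge_atTop 0] with t hsmall ht
  rw [dist_zero_right]
  by_contra! hgt
  -- near a time where `‖g‖ ≥ δ`, uniform continuity keeps `‖g‖ ≥ δ / 2`, so `φ` drops by `β η / 2`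
  have hslope : ∀ s ∈ Icc t (t + η / 2), φ' s ≤ -β := by
    intro s hs
    have hst : dist (g s) (g t) < δ / 2 := hclose s (ht.trans hs.1) t ht (by
      rw [Real.dist_eq, abs_lt]
      constructor <;> linarith [hs.1, hs.2])
    have hgs : δ / 2 ≤ ‖g s‖ := by
      rw [dist_eq_norm] at hst
      linarith [norm_sub_norm_le (g t) (g s), norm_sub_rev (g t) (g s)]
    calc φ' s ≤ -(c * ‖g s‖ ^ 2) := hφ' s (ht.trans hs.1)
      _ ≤ -β := neg_le_neg <|
          mul_le_mul_of_nonneg_left (pow_le_pow_left₀ (by positivity) hgs 2) hc.le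
  have hfall := sub_le_mul_sub_of_hasDerivAt_le (convex_Icc t (t + η / 2))
    (fun s hs ↦ hφ s (ht.trans hs.1)) hslope (left_mem_Icc.2 (by linarith))
    (right_mem_Icc.2 (by linarith)) (by linarith)
  linarith

section RegularizedNewton

variable {E F : Type*} [NormedAddCommGroup E] [InnerProductSpace ℝ E] [CompleteSpace E]
  [NormedAddCommGroup F] [InnerProductSpace ℝ F] [CompleteSpace F]

noncomputable def regularizedGram (ε : ℝ) (P : E →L[ℝ] F) : E →L[ℝ] E :=
  ε • ContinuousLinearMap.id ℝ E + (P†) ∘L P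

lemma regularizedGram_apply (ε : ℝ) (P : E →L[ℝ] F) (u : E) :
    regularizedGram ε P u = ε • u + (P†) (P u) :=
  rfl

lemma inner_regularizedGram_apply_self (ε : ℝ) (P : E →L[ℝ] F) (u : E) :
    ⟪regularizedGram ε P u, u⟫ = ε * ‖u‖ ^ 2 + ‖P u‖ ^ 2 := by
  rw [regularizedGram_apply, inner_add_left, real_inner_smul_left,
    ContinuousLinearMap.adjoint_inner_left, real_inner_self_eq_norm_sq, real_inner_self_eq_norm_sq]

lemma norm_regularizedGram_le {ε : ℝ} (hε : 0 ≤ ε) (P : E →L[ℝ] F) :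
    ‖regularizedGram ε P‖ ≤ ε + ‖P‖ ^ 2 := by
  calc ‖regularizedGram ε P‖ ≤ ‖ε‖ * ‖ContinuousLinearMap.id ℝ E‖ + ‖(P†) ∘L P‖ :=
        (norm_add_le _ _).trans (by gcongr; exact norm_smul_le ε (ContinuousLinearMap.id ℝ E))
    _ ≤ ε * 1 + ‖P‖ * ‖P‖ := by
        rw [Real.norm_of_nonneg hε, ContinuousLinearMap.norm_adjoint_comp_self]
        gcongr
        exact ContinuousLinearMap.norm_id_le
    _ = ε + ‖P‖ ^ 2 := by ring

lemma mul_norm_le_norm_regularizedGram_apply (ε : ℝ) (P : E →L[ℝ] F) (u : E) :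
    ε * ‖u‖ ≤ ‖regularizedGram ε P u‖ := by
  rcases (norm_nonneg u).eq_or_lt with hu | hu
  · rw [← hu, mul_zero]
    exact norm_nonneg _
  refine le_of_mul_le_mul_right ?_ hu
  calc ε * ‖u‖ * ‖u‖ ≤ ε * ‖u‖ ^ 2 + ‖P u‖ ^ 2 := by nlinarith [sq_nonneg ‖P u‖]
    _ = ⟪regularizedGram ε P u, u⟫ := (inner_regularizedGram_apply_self ε P u).symm
    _ ≤ ‖regularizedGram ε P u‖ * ‖u‖ := real_inner_le_norm _ _

lemma mul_norm_sq_le_inner_regularizedGram_apply {ε K : ℝ} (hε : 0 < ε) {P : E →L[ℝ] F}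
    (hP : ‖P‖ ≤ K) (u : E) :
    ε / (ε + K ^ 2) ^ 2 * ‖regularizedGram ε P u‖ ^ 2 ≤ ⟪regularizedGram ε P u, u⟫ := by
  have hεK : 0 < ε + K ^ 2 := by positivity
  have hGu : ‖regularizedGram ε P u‖ ≤ (ε + K ^ 2) * ‖u‖ := by
    have hnorm : ‖regularizedGram ε P‖ ≤ ε + K ^ 2 :=
      (norm_regularizedGram_le hε.le P).trans (by gcongr)
    exact ((regularizedGram ε P).le_opNorm u).trans (by gcongr)
  calc ε / (ε + K ^ 2) ^ 2 * ‖regularizedGram ε P u‖ ^ 2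
      ≤ ε / (ε + K ^ 2) ^ 2 * ((ε + K ^ 2) * ‖u‖) ^ 2 := by gcongr
    _ = ε * ‖u‖ ^ 2 := by field_simp
    _ ≤ ε * ‖u‖ ^ 2 + ‖P u‖ ^ 2 := le_add_of_nonneg_right (sq_nonneg _)
    _ = ⟪regularizedGram ε P u, u⟫ := (inner_regularizedGram_apply_self ε P u).symm

/-- The flow `w' = -(ε I + P†P)⁻¹ P† f` on `[0, ∞)`, written without the inverse. -/
def IsRegularizedNewtonFlow (ε : ℝ) (f : E → F) (P : E → E →L[ℝ] F) (w w' : ℝ → E) : Prop :=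
  ∀ t, 0 ≤ t → HasDerivAt w (w' t) t ∧
    regularizedGram ε (P (w t)) (w' t) = -(P (w t)†) (f (w t))

namespace IsRegularizedNewtonFlow

variable {ε K : ℝ} {f : E → F} {P : E → E →L[ℝ] F} {w w' : ℝ → E}

lemma hasDerivAt_norm_sq (hflow : IsRegularizedNewtonFlow ε f P w w')
    (hf : ∀ θ, HasFDerivAt f (P θ) θ) {t : ℝ} (ht : 0 ≤ t) :
    HasDerivAt (fun s ↦ ‖f (w s)‖ ^ 2) (2 * ⟪(P (w t)†) (f (w t)), w' t⟫) t := by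
  simpa [ContinuousLinearMap.adjoint_inner_left] using
    ((hf (w t)).comp_hasDerivAt t (hflow t ht).1).norm_sq

lemma inner_le (hflow : IsRegularizedNewtonFlow ε f P w w') (hε : 0 < ε) {t : ℝ} (ht : 0 ≤ t)
    (hP : ‖P (w t)‖ ≤ K) :
    ⟪(P (w t)†) (f (w t)), w' t⟫ ≤ -(ε / (ε + K ^ 2) ^ 2 * ‖(P (w t)†) (f (w t))‖ ^ 2) := by
  have h := mul_norm_sq_le_inner_regularizedGram_apply hε hP (w' t)
  rw [(hflow t ht).2, norm_neg, inner_neg_left] at h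
  linarith

lemma norm_deriv_le (hflow : IsRegularizedNewtonFlow ε f P w w') (hε : 0 < ε) {t : ℝ}
    (ht : 0 ≤ t) : ‖w' t‖ ≤ ‖(P (w t)†) (f (w t))‖ / ε := by
  rw [le_div_iff₀ hε, mul_comm, ← norm_neg ((P (w t)†) (f (w t))), ← (hflow t ht).2]
  exact mul_norm_le_norm_regularizedGram_apply ε _ _

lemma norm_le_norm_initial (hflow : IsRegularizedNewtonFlow ε f P w w') (hε : 0 < ε)
    (hf : ∀ θ, HasFDerivAt f (P θ) θ) {t : ℝ} (ht : 0 ≤ t) : ‖f (w t)‖ ≤ ‖f (w 0)‖ := by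
  have hanti := antitoneOn_Ici_of_hasDerivAt_nonpos (fun s hs ↦ hflow.hasDerivAt_norm_sq hf hs)
    fun s hs ↦ by
      have hdecay := hflow.inner_le hε hs le_rfl
      have hnonneg : 0 ≤ ε / (ε + ‖P (w s)‖ ^ 2) ^ 2 * ‖(P (w s)†) (f (w s))‖ ^ 2 := by positivity
      linarith
  exact (pow_le_pow_iff_left₀ (norm_nonneg _) (norm_nonneg _) two_ne_zero).1
    (hanti self_mem_Ici ht ht)

theorem exists_norm_le (hflow : IsRegularizedNewtonFlow ε f P w w') (hε : 0 < ε)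
    (hf : ∀ θ, HasFDerivAt f (P θ) θ) (hS : IsCompact {θ | ‖f θ‖ ≤ ‖f (w 0)‖}) :
    ∃ C, ∀ t, 0 ≤ t → ‖w t‖ ≤ C := by
  obtain ⟨C, hC⟩ := isBounded_iff_forall_norm_le.1 hS.isBounded
  exact ⟨C, fun t ht ↦ hC _ (hflow.norm_le_norm_initial hε hf ht)⟩

theorem tendsto_adjoint_apply_zero (hflow : IsRegularizedNewtonFlow ε f P w w') (hε : 0 < ε)
    (hf : ∀ θ, HasFDerivAt f (P θ) θ) (hP : ∀ θ, ‖P θ‖ ≤ K) (hPc : Continuous P)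
    (hS : IsCompact {θ | ‖f θ‖ ≤ ‖f (w 0)‖}) :
    Tendsto (fun t ↦ (P (w t)†) (f (w t))) atTop (𝓝 0) := by
  have hV : Continuous fun θ ↦ (P θ†) (f θ) :=
    (ContinuousLinearMap.adjoint.continuous.comp hPc).clm_apply
      (continuous_iff_continuousAt.2 fun θ ↦ (hf θ).continuousAt)
  have hwS : MapsTo w (Ici 0) {θ | ‖f θ‖ ≤ ‖f (w 0)‖} := fun t ht ↦
    hflow.norm_le_norm_initial hε hf ht
  obtain ⟨R, hR⟩ := hS.exists_bound_of_continuousOn hV.continuousOn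
  have hlip : LipschitzOnWith (R / ε).toNNReal w (Ici 0) :=
    (convex_Ici 0).lipschitzOnWith_of_nnnorm_hasDerivWithin_le
      (fun t ht ↦ (hflow t ht).1.hasDerivWithinAt) fun t ht ↦ by
        rw [← NNReal.coe_le_coe, coe_nnnorm]
        exact (hflow.norm_deriv_le hε ht).trans
          ((div_le_div_of_nonneg_right (hR _ (hwS ht)) hε.le).trans (Real.le_coe_toNNReal _))
  refine tendsto_zero_of_hasDerivAt_le_neg_mul_norm_sq (b := 0)
    (by positivity : 0 < 2 * (ε / (ε + K ^ 2) ^ 2)) (fun t ht ↦ hflow.hasDerivAt_norm_sq hf ht)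
    (fun t ht ↦ by linarith [hflow.inner_le hε ht (hP _)]) (fun t _ ↦ by positivity) ?_
  exact (hS.uniformContinuousOn_of_continuous hV.continuousOn).comp hlip.uniformContinuousOn hwS

end IsRegularizedNewtonFlow

end RegularizedNewton

section Matrix

variable {n : Type*} [Fintype n] [DecidableEq n]

local notation "T" => Matrix.toEuclideanCLM (𝕜 := ℝ) (n := n)

lemma toEuclideanCLM_transpose (B : Matrix n n ℝ) : T Bᵀ = (T B)† := by
  rw [← ContinuousLinearMap.star_eq_adjoint, ← map_star, star_eq_conjTranspose,
    conjTranspose_eq_transpose_of_trivial]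

lemma toEuclideanCLM_smul_one_add_transpose_mul (ε : ℝ) (B : Matrix n n ℝ) :
    T (ε • 1 + Bᵀ * B) = regularizedGram ε (T B) := by
  rw [map_add, map_smul, map_one, map_mul, toEuclideanCLM_transpose]
  rfl

lemma regularizedGram_toEuclideanCLM_inv_apply {ε : ℝ} (hε : 0 < ε) (B : Matrix n n ℝ)
    (v : EuclideanSpace ℝ n) : regularizedGram ε (T B) (T (ε • 1 + Bᵀ * B)⁻¹ v) = v := by
  have hpos : (ε • 1 + Bᵀ * B).PosDef := by
    simpa [conjTranspose_eq_transpose_of_trivial] using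
      (PosDef.one.smul hε).add_posSemidef (posSemidef_conjTranspose_mul_self B)
  rw [← toEuclideanCLM_smul_one_add_transpose_mul, ← mul_apply_eq_comp, ← map_mul,
    mul_nonsing_inv _ (isUnit_iff_isUnit_det _ |>.1 hpos.isUnit), map_one,
    one_apply_eq_self]

end Matrix

/-- Let `f : ℝ^d → ℝ^d` be globally Lipschitz and continuously
differentiable with Jacobian `A θ = Df(θ)`, and suppose `θ ↦ ‖f θ‖` is coercive
(each sublevel set is compact).  Let `ε > 0` and let `w` be a differentiable solution
of the regularized Newton–Raphson flow.  Then the trajectory `{w t : t ≥ 0}` is bounded,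
and `A(w(t))ᵀ f(w(t)) → 0` as `t → ∞`. -/
theorem stmt_2 (d : ℕ)
    (f : EuclideanSpace ℝ (Fin d) → EuclideanSpace ℝ (Fin d))
    (K : NNReal) (hLip : LipschitzWith K f)
    (A : EuclideanSpace ℝ (Fin d) → Matrix (Fin d) (Fin d) ℝ)
    (hf : ∀ θ, HasFDerivAt f (Matrix.toEuclideanCLM (𝕜 := ℝ) (A θ)) θ)
    (hA : Continuous A)
    (hcoercive : ∀ r : ℝ, IsCompact {θ : EuclideanSpace ℝ (Fin d) | ‖f θ‖ ≤ r})
    (ε : ℝ) (hε : 0 < ε)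
    (w : ℝ → EuclideanSpace ℝ (Fin d))
    (hw : ∀ t : ℝ, 0 ≤ t → HasDerivAt w
      (-(Matrix.toEuclideanCLM (𝕜 := ℝ)
          ((ε • (1 : Matrix (Fin d) (Fin d) ℝ) + (A (w t))ᵀ * A (w t))⁻¹ * (A (w t))ᵀ)
        (f (w t)))) t) :
    (∃ C : ℝ, ∀ t : ℝ, 0 ≤ t → ‖w t‖ ≤ C) ∧
      Tendsto (fun t : ℝ => Matrix.toEuclideanCLM (𝕜 := ℝ) ((A (w t))ᵀ) (f (w t)))
        atTop (𝓝 0) := by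
  have hflow : IsRegularizedNewtonFlow ε f (fun θ ↦ toEuclideanCLM (𝕜 := ℝ) (A θ)) w fun t ↦
      -toEuclideanCLM (𝕜 := ℝ) ((ε • 1 + (A (w t))ᵀ * A (w t))⁻¹ * (A (w t))ᵀ) (f (w t)) :=
    fun t ht ↦ ⟨hw t ht, by
      rw [map_neg, map_mul, mul_apply_eq_comp, regularizedGram_toEuclideanCLM_inv_apply hε,
        toEuclideanCLM_transpose]⟩
  have hP : ∀ θ, ‖toEuclideanCLM (𝕜 := ℝ) (A θ)‖ ≤ K := fun θ ↦ (hf θ).le_of_lipschitz hLip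
  have hPc : Continuous fun θ ↦ toEuclideanCLM (𝕜 := ℝ) (A θ) :=
    (LinearMap.continuous_of_finiteDimensional
      (toEuclideanCLM (𝕜 := ℝ) (n := Fin d)).toAlgEquiv.toLinearMap).comp hA
  have hS := hcoercive ‖f (w 0)‖
  simp_rw [toEuclideanCLM_transpose]
  exact ⟨hflow.exists_norm_le hε hf hS, hflow.tendsto_adjoint_apply_zero hε hf hP hPc hS⟩
end

section
/- Let f : ℝ^d → ℝ^d be globally Lipschitz and continuously differentiable with Jacobian A(θ) = Df(θ), suppose θ ↦ ‖f(θ)‖ is coercive, suppose f has a unique zero θ* ∈ ℝ^d, suppose A(θ)ᵀ f(θ) ≠ 0 for every θ ≠ θ*, and suppose A(θ*) is nonsingular. Let ε > 0. Then the regularized Newton–Raphson flow is globally asymptotically stable: every differentiable solution w : [0,∞) → ℝ^d satisfies lim_{t→∞} w(t) = θ*, and the equilibrium θ* is stable in the sense of Lyapunov. -/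
/-!
`V = ‖f‖²` is a Lyapunov function for the flow: along a solution,
`d/dt ‖f(w)‖² = -2 gᵀ (εI + AᵀA)⁻¹ g` with `g = Aᵀ f(w)`, and `(εI + AᵀA)⁻¹` is positive definite,
so `V` is nonincreasing and strictly decreasing away from `θ*`. Coercivity makes the sublevel sets
of `V` compact. On a compact set avoiding `θ*` the dissipation is bounded below by a positive
constant, so `V(w(t))` cannot stay above any positive level, i.e. `V(w(t)) → 0`; and since `θ*` is
the only zero of `f`, small values of `V` force `w` close to `θ*`. Lyapunov stability follows from
the same fact together with `V(w(t)) ≤ V(w(0))` and continuity of `V` at `θ*`.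
-/

open Matrix Filter Topology

/-- `w : [0,∞) → ℝ^d` is a (differentiable) solution of the regularized Newton–Raphson
flow `d/dt w(t) = −[εI + A(w(t))ᵀ A(w(t))]⁻¹ A(w(t))ᵀ f(w(t))`. -/
def IsRegNRFlowSol (d : ℕ) (ε : ℝ)
    (f : EuclideanSpace ℝ (Fin d) → EuclideanSpace ℝ (Fin d))
    (A : EuclideanSpace ℝ (Fin d) → Matrix (Fin d) (Fin d) ℝ)
    (w : ℝ → EuclideanSpace ℝ (Fin d)) : Prop :=
  ∀ t : ℝ, 0 ≤ t → HasDerivAt w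
    (-(Matrix.toEuclideanCLM (𝕜 := ℝ)
        ((ε • (1 : Matrix (Fin d) (Fin d) ℝ) + (A (w t))ᵀ * A (w t))⁻¹ * (A (w t))ᵀ)
      (f (w t)))) t

lemma sub_le_mul_sub_of_hasDerivAt_le_of_nonneg {g g' : ℝ → ℝ} {C : ℝ}
    (hg : ∀ t, 0 ≤ t → HasDerivAt g (g' t) t) (hg' : ∀ t, 0 ≤ t → g' t ≤ C)
    {s t : ℝ} (hs : 0 ≤ s) (hst : s ≤ t) : g t - g s ≤ C * (t - s) := by
  have hint : ∀ t ∈ interior (Set.Ici (0 : ℝ)), 0 ≤ t := fun t ht ↦ interior_subset ht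
  refine (convex_Ici 0).image_sub_le_mul_sub_of_deriv_le
    (fun t ht ↦ (hg t ht).continuousAt.continuousWithinAt)
    (fun t ht ↦ (hg t (hint t ht)).differentiableAt.differentiableWithinAt)
    (fun t ht ↦ ?_) s hs t (hs.trans hst) hst
  rw [(hg t (hint t ht)).deriv]
  exact hg' t (hint t ht)

section Lyapunov

variable {E : Type*} {V ψ : E → ℝ} {θ₀ : E}

lemma antitoneOn_of_hasDerivAt_neg (hψnonneg : ∀ θ, 0 ≤ ψ θ) {w : ℝ → E}
    (hw : ∀ t, 0 ≤ t → HasDerivAt (fun s ↦ V (w s)) (-ψ (w t)) t) :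
    AntitoneOn (fun t ↦ V (w t)) (Set.Ici 0) := fun s hs t _ hst ↦ by
  have := sub_le_mul_sub_of_hasDerivAt_le_of_nonneg hw
    (fun t _ ↦ neg_nonpos.2 (hψnonneg (w t))) hs hst
  linarith

variable [MetricSpace E]

lemma exists_pos_forall_lt_imp_dist_lt (hV : Continuous V)
    (hVcpt : ∀ r, IsCompact {θ | V θ ≤ r}) (hVpos : ∀ θ, θ ≠ θ₀ → 0 < V θ)
    {δ : ℝ} (hδ : 0 < δ) : ∃ r > 0, ∀ θ, V θ < r → dist θ θ₀ < δ := by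
  have hK : IsCompact ({θ | V θ ≤ 1} ∩ {θ | δ ≤ dist θ θ₀}) :=
    (hVcpt 1).inter_right (isClosed_le continuous_const (continuous_id.dist continuous_const))
  obtain ⟨a, ha, hVa⟩ := hK.exists_forall_le' hV.continuousOn (a := 0)
    fun θ ⟨_, (hθ : δ ≤ dist θ θ₀)⟩ ↦ hVpos θ fun h ↦ by rw [h, dist_self] at hθ; linarith
  refine ⟨min a 1, lt_min ha one_pos, fun θ hθ ↦ ?_⟩
  by_contra! hδθ
  exact (hVa θ ⟨hθ.le.trans (min_le_right _ _), hδθ⟩).not_gt (hθ.trans_le (min_le_left _ _))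

lemma tendsto_nhds_of_tendsto_zero {α : Type*} {l : Filter α} {g : α → E} (hV : Continuous V)
    (hVcpt : ∀ r, IsCompact {θ | V θ ≤ r}) (hVpos : ∀ θ, θ ≠ θ₀ → 0 < V θ)
    (hg : Tendsto (fun x ↦ V (g x)) l (𝓝 0)) : Tendsto g l (𝓝 θ₀) := by
  refine Metric.tendsto_nhds.2 fun δ hδ ↦ ?_
  obtain ⟨r, hr, hrδ⟩ := exists_pos_forall_lt_imp_dist_lt hV hVcpt hVpos hδ
  filter_upwards [hg.eventually (gt_mem_nhds hr)] with x hx using hrδ _ hx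

lemma tendsto_zero_of_hasDerivAt_neg (hV : Continuous V) (hVcpt : ∀ r, IsCompact {θ | V θ ≤ r})
    (hV₀ : V θ₀ = 0) (hVpos : ∀ θ, θ ≠ θ₀ → 0 < V θ) (hψ : Continuous ψ)
    (hψnonneg : ∀ θ, 0 ≤ ψ θ) (hψpos : ∀ θ, θ ≠ θ₀ → 0 < ψ θ) {w : ℝ → E}
    (hw : ∀ t, 0 ≤ t → HasDerivAt (fun s ↦ V (w s)) (-ψ (w t)) t) :
    Tendsto (fun t ↦ V (w t)) atTop (𝓝 0) := by
  have hVnonneg : ∀ θ, 0 ≤ V θ := fun θ ↦ by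
    rcases eq_or_ne θ θ₀ with rfl | h
    exacts [hV₀.ge, (hVpos θ h).le]
  refine tendsto_order.2 ⟨fun a ha ↦ Eventually.of_forall fun t ↦ ha.trans_le (hVnonneg _),
    fun η hη ↦ ?_⟩
  have hanti := antitoneOn_of_hasDerivAt_neg hψnonneg hw
  by_contra hlim
  have hηV : ∀ t, 0 ≤ t → η ≤ V (w t) := fun t ht ↦ by
    by_contra! h
    exact hlim (eventually_atTop.2 ⟨t, fun s hs ↦ (hanti ht (ht.trans hs) hs).trans_lt h⟩)
  -- Along the orbit `ψ` is bounded below by `c > 0`, so `V` would decrease at least linearly.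
  set K := {θ | V θ ≤ V (w 0)} ∩ {θ | η ≤ V θ}
  have hK : IsCompact K := (hVcpt _).inter_right (isClosed_le continuous_const hV)
  have hwK : ∀ t, 0 ≤ t → w t ∈ K := fun t ht ↦ ⟨hanti Set.self_mem_Ici ht ht, hηV t ht⟩
  obtain ⟨c, hc, hψc⟩ := hK.exists_forall_le' hψ.continuousOn (a := 0)
    fun θ ⟨_, (hθ : η ≤ V θ)⟩ ↦ hψpos θ fun h ↦ by rw [h, hV₀] at hθ; linarith
  have hT : 0 ≤ V (w 0) / c + 1 := add_nonneg (div_nonneg (hVnonneg _) hc.le) zero_le_one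
  have hdecay := sub_le_mul_sub_of_hasDerivAt_le_of_nonneg hw
    (fun t ht ↦ neg_le_neg (hψc _ (hwK t ht))) le_rfl hT
  have hcT : c * (V (w 0) / c + 1) = V (w 0) + c := by field_simp
  linarith [hVnonneg (w (V (w 0) / c + 1))]

lemma exists_forall_dist_le_of_hasDerivAt_neg (hV : Continuous V)
    (hVcpt : ∀ r, IsCompact {θ | V θ ≤ r}) (hV₀ : V θ₀ = 0) (hVpos : ∀ θ, θ ≠ θ₀ → 0 < V θ)
    (hψnonneg : ∀ θ, 0 ≤ ψ θ) {δ : ℝ} (hδ : 0 < δ) :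
    ∃ δ' > 0, ∀ w : ℝ → E, (∀ t, 0 ≤ t → HasDerivAt (fun s ↦ V (w s)) (-ψ (w t)) t) →
      dist (w 0) θ₀ ≤ δ' → ∀ t, 0 ≤ t → dist (w t) θ₀ ≤ δ := by
  obtain ⟨r, hr, hrδ⟩ := exists_pos_forall_lt_imp_dist_lt hV hVcpt hVpos hδ
  obtain ⟨δ', hδ', hVr⟩ := Metric.continuousAt_iff.1 hV.continuousAt r hr
  refine ⟨δ' / 2, half_pos hδ', fun w hw hw₀ t ht ↦ (hrδ _ ?_).le⟩
  have h0 := hVr (hw₀.trans_lt (half_lt_self hδ'))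
  rw [hV₀, Real.dist_eq, sub_zero] at h0
  exact (antitoneOn_of_hasDerivAt_neg hψnonneg hw Set.self_mem_Ici ht ht).trans_lt (abs_lt.1 h0).2

end Lyapunov

section RegularizedNewtonRaphson

variable {n : Type*} [Fintype n] [DecidableEq n]

lemma posDef_smul_one_add_transpose_mul {ε : ℝ} (hε : 0 < ε) (M : Matrix n n ℝ) :
    (ε • 1 + Mᵀ * M).PosDef :=
  (PosDef.one.smul hε).add_posSemidef <| by
    simpa only [conjTranspose_eq_transpose_of_trivial] using posSemidef_conjTranspose_mul_self M

lemma continuous_inv_smul_one_add_transpose_mul {X : Type*} [TopologicalSpace X] {ε : ℝ}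
    (hε : 0 < ε) {M : X → Matrix n n ℝ} (hM : Continuous M) :
    Continuous fun x ↦ (ε • 1 + (M x)ᵀ * M x)⁻¹ := by
  have hC : Continuous fun x ↦ ε • (1 : Matrix n n ℝ) + (M x)ᵀ * M x :=
    continuous_const.add (hM.matrix_transpose.matrix_mul hM)
  refine continuous_iff_continuousAt.2 fun x ↦ (continuousAt_matrix_inv _ ?_).comp hC.continuousAt
  exact NormedRing.inverse_continuousAt
    (Units.mk0 _ (posDef_smul_one_add_transpose_mul hε (M x)).det_pos.ne')

noncomputable def regNRDissipation (ε : ℝ) (f : EuclideanSpace ℝ n → EuclideanSpace ℝ n)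
    (A : EuclideanSpace ℝ n → Matrix n n ℝ) (θ : EuclideanSpace ℝ n) : ℝ :=
  2 * ((A θ)ᵀ *ᵥ (f θ).ofLp ⬝ᵥ (ε • 1 + (A θ)ᵀ * A θ)⁻¹ *ᵥ ((A θ)ᵀ *ᵥ (f θ).ofLp))

variable {ε : ℝ} {f : EuclideanSpace ℝ n → EuclideanSpace ℝ n}
  {A : EuclideanSpace ℝ n → Matrix n n ℝ}

lemma regNRDissipation_nonneg (hε : 0 < ε) (θ : EuclideanSpace ℝ n) :
    0 ≤ regNRDissipation ε f A θ := by
  have := (posDef_smul_one_add_transpose_mul hε (A θ)).inv.posSemidef.dotProduct_mulVec_nonneg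
    ((A θ)ᵀ *ᵥ (f θ).ofLp)
  simp only [star_trivial] at this
  unfold regNRDissipation
  positivity

lemma regNRDissipation_pos (hε : 0 < ε) {θ : EuclideanSpace ℝ n}
    (hθ : toEuclideanCLM (𝕜 := ℝ) (A θ)ᵀ (f θ) ≠ 0) : 0 < regNRDissipation ε f A θ := by
  have hv : (A θ)ᵀ *ᵥ (f θ).ofLp ≠ 0 := fun h ↦ hθ (by ext i; simp [h])
  have := (posDef_smul_one_add_transpose_mul hε (A θ)).inv.dotProduct_mulVec_pos hv
  simp only [star_trivial] at this
  unfold regNRDissipation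
  positivity

lemma continuous_regNRDissipation (hε : 0 < ε) (hf : Continuous f) (hA : Continuous A) :
    Continuous (regNRDissipation ε f A) := by
  have hv : Continuous fun θ ↦ (A θ)ᵀ *ᵥ (f θ).ofLp :=
    hA.matrix_transpose.matrix_mulVec ((PiLp.continuous_ofLp 2 _).comp hf)
  exact continuous_const.mul
    (hv.dotProduct ((continuous_inv_smul_one_add_transpose_mul hε hA).matrix_mulVec hv))

end RegularizedNewtonRaphson

open RealInnerProductSpace in
lemma IsRegNRFlowSol.hasDerivAt_norm_sq {d : ℕ} {ε : ℝ}
    {f : EuclideanSpace ℝ (Fin d) → EuclideanSpace ℝ (Fin d)}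
    {A : EuclideanSpace ℝ (Fin d) → Matrix (Fin d) (Fin d) ℝ} {w : ℝ → EuclideanSpace ℝ (Fin d)}
    (hw : IsRegNRFlowSol d ε f A w) (hf : ∀ θ, HasFDerivAt f (toEuclideanCLM (𝕜 := ℝ) (A θ)) θ)
    {t : ℝ} (ht : 0 ≤ t) :
    HasDerivAt (fun s ↦ ‖f (w s)‖ ^ 2) (-regNRDissipation ε f A (w t)) t := by
  refine ((hf (w t)).comp_hasDerivAt t (hw t ht)).norm_sq.congr_deriv ?_
  rw [Function.comp_apply, map_neg, inner_neg_right, inner_toEuclideanCLM, ofLp_toEuclideanCLM,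
    ← mulVec_mulVec, dotProduct_mulVec, ← mulVec_transpose, regNRDissipation]
  ring

theorem stmt_3_general (d : ℕ)
    (f : EuclideanSpace ℝ (Fin d) → EuclideanSpace ℝ (Fin d))
    (A : EuclideanSpace ℝ (Fin d) → Matrix (Fin d) (Fin d) ℝ)
    (hf : ∀ θ, HasFDerivAt f (Matrix.toEuclideanCLM (𝕜 := ℝ) (A θ)) θ)
    (hA : Continuous A)
    (hcoercive : ∀ r : ℝ, IsCompact {θ : EuclideanSpace ℝ (Fin d) | ‖f θ‖ ≤ r})
    (θstar : EuclideanSpace ℝ (Fin d))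
    (hzero : f θstar = 0)
    (huniq : ∀ θ, f θ = 0 → θ = θstar)
    (hAf : ∀ θ, θ ≠ θstar → Matrix.toEuclideanCLM (𝕜 := ℝ) ((A θ)ᵀ) (f θ) ≠ 0)
    (ε : ℝ) (hε : 0 < ε) :
    (∀ w : ℝ → EuclideanSpace ℝ (Fin d), IsRegNRFlowSol d ε f A w →
        Tendsto w atTop (𝓝 θstar)) ∧
      (∀ δ : ℝ, 0 < δ → ∃ δ' : ℝ, 0 < δ' ∧
        ∀ w : ℝ → EuclideanSpace ℝ (Fin d), IsRegNRFlowSol d ε f A w →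
          ‖w 0 - θstar‖ ≤ δ' → ∀ t : ℝ, 0 ≤ t → ‖w t - θstar‖ ≤ δ) := by
  have hfc : Continuous f := continuous_iff_continuousAt.2 fun θ ↦ (hf θ).continuousAt
  have hV : Continuous fun θ ↦ ‖f θ‖ ^ 2 := hfc.norm.pow 2
  have hVcpt : ∀ r, IsCompact {θ | ‖f θ‖ ^ 2 ≤ r} := fun r ↦
    (hcoercive √r).of_isClosed_subset (isClosed_le hV continuous_const)
      fun _ ↦ Real.le_sqrt_of_sq_le
  have hV₀ : ‖f θstar‖ ^ 2 = 0 := by simp [hzero]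
  have hVpos : ∀ θ, θ ≠ θstar → 0 < ‖f θ‖ ^ 2 := fun θ hθ ↦
    pow_pos (norm_pos_iff.2 fun h ↦ hθ (huniq θ h)) 2
  have hderiv := fun w (hw : IsRegNRFlowSol d ε f A w) t (ht : 0 ≤ t) ↦
    hw.hasDerivAt_norm_sq hf ht
  refine ⟨fun w hw ↦ tendsto_nhds_of_tendsto_zero hV hVcpt hVpos ?_, fun δ hδ ↦ ?_⟩
  · exact tendsto_zero_of_hasDerivAt_neg hV hVcpt hV₀ hVpos
      (continuous_regNRDissipation hε hfc hA) (regNRDissipation_nonneg hε)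
      (fun θ hθ ↦ regNRDissipation_pos hε (hAf θ hθ)) (hderiv w hw)
  obtain ⟨δ', hδ', hstab⟩ :=
    exists_forall_dist_le_of_hasDerivAt_neg hV hVcpt hV₀ hVpos (regNRDissipation_nonneg hε) hδ
  refine ⟨δ', hδ', fun w hw hw₀ t ht ↦ ?_⟩
  simpa only [dist_eq_norm] using hstab w (hderiv w hw) (by rwa [dist_eq_norm]) t ht

/-- Under the assumptions: `f` globally Lipschitz and continuously
differentiable with Jacobian `A`, `‖f‖` coercive, `f` has the unique zero `θ*`,
`A(θ)ᵀ f(θ) ≠ 0` for `θ ≠ θ*`, and `A(θ*)` nonsingular, the regularized Newton–Raphson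
flow is globally asymptotically stable: every differentiable solution converges to `θ*`,
and `θ*` is stable in the sense of Lyapunov. -/
theorem stmt_3 (d : ℕ)
    (f : EuclideanSpace ℝ (Fin d) → EuclideanSpace ℝ (Fin d))
    (K : NNReal) (hLip : LipschitzWith K f)
    (A : EuclideanSpace ℝ (Fin d) → Matrix (Fin d) (Fin d) ℝ)
    (hf : ∀ θ, HasFDerivAt f (Matrix.toEuclideanCLM (𝕜 := ℝ) (A θ)) θ)
    (hA : Continuous A)
    (hcoercive : ∀ r : ℝ, IsCompact {θ : EuclideanSpace ℝ (Fin d) | ‖f θ‖ ≤ r})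
    (θstar : EuclideanSpace ℝ (Fin d))
    (hzero : f θstar = 0)
    (huniq : ∀ θ, f θ = 0 → θ = θstar)
    (hAf : ∀ θ, θ ≠ θstar → Matrix.toEuclideanCLM (𝕜 := ℝ) ((A θ)ᵀ) (f θ) ≠ 0)
    (hAstar : IsUnit (A θstar))
    (ε : ℝ) (hε : 0 < ε) :
    (∀ w : ℝ → EuclideanSpace ℝ (Fin d), IsRegNRFlowSol d ε f A w →
        Tendsto w atTop (𝓝 θstar)) ∧
      (∀ δ : ℝ, 0 < δ → ∃ δ' : ℝ, 0 < δ' ∧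
        ∀ w : ℝ → EuclideanSpace ℝ (Fin d), IsRegNRFlowSol d ε f A w →
          ‖w 0 - θstar‖ ≤ δ' → ∀ t : ℝ, 0 ≤ t → ‖w t - θstar‖ ≤ δ) :=
  stmt_3_general d f A hf hA hcoercive θstar hzero huniq hAf ε hε
end

section
/- Suppose w : [0,∞) → ℝ^d is Lipschitz continuous, V : ℝ^d → [0,∞) is continuous and coercive, and U : ℝ^d → [0,∞) satisfies: (i) for each δ > 0, inf{ U(θ) : V(θ) ≥ δ } > 0; and (ii) V(w(t)) ≤ V(w(s)) − ∫_s^t U(w(τ)) dτ for all 0 ≤ s ≤ t. Then there exists a function B : (0,∞) → (0,∞) such that V(w(t)) ≤ η for all t ≥ V(w(0))·B(η) and all η > 0; in particular, lim_{t→∞} V(w(t)) = 0. -/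
open Filter Topology MeasureTheory

/-- Suppose `w : [0,∞) → ℝ^d` is Lipschitz, `V : ℝ^d → [0,∞)` is
continuous and coercive, and `U : ℝ^d → [0,∞)` satisfies:
(i) for each `δ > 0`, `inf { U θ : V θ ≥ δ } > 0`; and
(ii) `V (w t) ≤ V (w s) − ∫_s^t U (w τ) dτ` for all `0 ≤ s ≤ t`.
Then there exists `B : (0,∞) → (0,∞)` such that `V (w t) ≤ η` for all
`t ≥ V (w 0) · B η` and all `η > 0`; in particular `V (w t) → 0` as `t → ∞`. -/
theorem stmt_4 (d : ℕ)
    (w : ℝ → EuclideanSpace ℝ (Fin d))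
    (Kw : NNReal) (hw : LipschitzOnWith Kw w (Set.Ici 0))
    (V : EuclideanSpace ℝ (Fin d) → ℝ)
    (hVcont : Continuous V) (hVnonneg : ∀ θ, 0 ≤ V θ)
    (hVcoercive : ∀ r : ℝ, IsCompact {θ : EuclideanSpace ℝ (Fin d) | V θ ≤ r})
    (U : EuclideanSpace ℝ (Fin d) → ℝ) (hUnonneg : ∀ θ, 0 ≤ U θ)
    (hUinf : ∀ δ : ℝ, 0 < δ → ∃ c : ℝ, 0 < c ∧ ∀ θ, δ ≤ V θ → c ≤ U θ)
    (hUint : ∀ s t : ℝ, 0 ≤ s → s ≤ t →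
      IntervalIntegrable (fun τ => U (w τ)) volume s t)
    (hdecr : ∀ s t : ℝ, 0 ≤ s → s ≤ t →
      V (w t) ≤ V (w s) - ∫ τ in s..t, U (w τ)) :
    (∃ B : ℝ → ℝ, (∀ η : ℝ, 0 < η → 0 < B η) ∧
        ∀ η : ℝ, 0 < η → ∀ t : ℝ, V (w 0) * B η ≤ t → V (w t) ≤ η) ∧
      Tendsto (fun t : ℝ => V (w t)) atTop (𝓝 0) := by
  choose! c hc hcc using hUinf
  -- monotonicity: for 0 ≤ s ≤ t, V (w t) ≤ V (w s)
  have mono : ∀ s t : ℝ, 0 ≤ s → s ≤ t → V (w t) ≤ V (w s) := by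
    intro s t hs hst
    have h1 := hdecr s t hs hst
    have h2 : 0 ≤ ∫ τ in s..t, U (w τ) :=
      intervalIntegral.integral_nonneg hst (fun u _ => hUnonneg _)
    linarith
  set B : ℝ → ℝ := fun η => if 0 < η then 1 / c η else 1 with hB
  have hBpos : ∀ η : ℝ, 0 < η → 0 < B η := by
    intro η hη
    simp only [hB, if_pos hη]
    exact one_div_pos.2 (hc η hη)
  have key : ∀ η : ℝ, 0 < η → ∀ t : ℝ, V (w 0) * B η ≤ t → V (w t) ≤ η := by
    intro η hη t ht
    have hcη := hc η hη
    have ht0 : 0 ≤ t :=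
      le_trans (mul_nonneg (hVnonneg _) (hBpos η hη).le) ht
    by_contra h
    push_neg at h
    have hmono : ∀ x ∈ Set.Icc (0:ℝ) t, η ≤ V (w x) := fun x hx =>
      le_trans (le_of_lt h) (mono x t hx.1 hx.2)
    have hlb : c η * t ≤ ∫ τ in (0:ℝ)..t, U (w τ) := by
      have := intervalIntegral.integral_mono_on ht0
        (intervalIntegrable_const (c := c η)) (hUint 0 t le_rfl ht0)
        (fun x hx => hcc η hη (w x) (hmono x hx))
      simpa [mul_comm] using this
    have hd := hdecr 0 t le_rfl ht0
    have htB : V (w 0) ≤ c η * t := by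
      have hBe : B η = 1 / c η := if_pos hη
      rw [hBe] at ht
      have ht' : V (w 0) / c η ≤ t := by rwa [div_eq_mul_one_div]
      calc V (w 0) = c η * (V (w 0) / c η) := by field_simp
        _ ≤ c η * t := mul_le_mul_of_nonneg_left ht' hcη.le
    have : V (w t) ≤ 0 := by linarith
    linarith [hη, h]
  refine ⟨⟨B, hBpos, key⟩, ?_⟩
  rw [tendsto_order]
  constructor
  · intro a ha
    exact Eventually.of_forall fun t => lt_of_lt_of_le ha (hVnonneg _)
  · intro a ha
    have h2 : 0 < a / 2 := by linarith
    refine eventually_atTop.2 ⟨V (w 0) * B (a / 2), fun t ht => ?_⟩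
    exact lt_of_le_of_lt (key (a/2) h2 t ht) (by linarith)
end

section
/- Let X and U be finite nonempty sets, γ ∈ (0,1), and for each u ∈ U let P_u : X × X → ℝ satisfy P_u(x,x') ≥ 0 and Σ_{x'} P_u(x,x') = 1 for all x. Let Q : ℝ^d × X × U → ℝ be such that for each (x,u), θ ↦ Q(θ,x,u) is globally Lipschitz and twice continuously differentiable. Define ς^θ(x,u) = −γ Σ_{x'∈X} P_u(x,x') max_{u'∈U} Q(θ,x',u') + Q(θ,x,u). Let w : [0,T] → ℝ^d be Lipschitz continuous. Then for each (x,u) the function t ↦ ς^{w(t)}(x,u) is Lipschitz continuous on [0,T], and at any t₀ where both this function and w are differentiable, d/dt ς^{w(t)}(x,u)|_{t=t₀} = [ −γ Σ_{x'∈X} P_u(x,x') ∇_θ Q(w(t₀), x', φ(x')) + ∇_θ Q(w(t₀), x, u) ] · w'(t₀), for every map φ : X → U satisfying Q(w(t₀), x', φ(x')) = max_{u'∈U} Q(w(t₀), x', u') for all x' ∈ X. -/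
open Filter Topology
open scoped RealInnerProductSpace BigOperators

/-! The greedy map `φ` turns the maximum in `ς^θ` (`bellmanError`) into a choice, giving a
smooth majorant `θ ↦ -γ Σ_{x'} P_u(x,x') Q(θ,x',φ x') + Q(θ,x,u)` (`policyBellmanError`) of
`ς^θ` (since `-γ P_u(x,x') ≤ 0`) that touches it at `θ = w t₀`. Two differentiable functions
of `t` that touch from one side have the same derivative at the contact point, so the
derivative of `t ↦ ς^{w t}` is that of the majorant, which the chain rule computes. Lipschitz
continuity holds because maxima, finite linear combinations and compositions of Lipschitz maps
are Lipschitz. -/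

section Lipschitz

variable {α : Type*} [PseudoMetricSpace α]

theorem LipschitzWith.ciSup {ι : Type*} [Finite ι] [Nonempty ι] {f : ι → α → ℝ} {K : NNReal}
    (hf : ∀ i, LipschitzWith K (f i)) : LipschitzWith K fun a => ⨆ i, f i a :=
  LipschitzWith.of_le_add_mul K fun a b =>
    ciSup_le fun i => ((hf i).le_add_mul a b).trans <|
      add_le_add_left (le_ciSup (Set.finite_range fun i => f i b).bddAbove i) _

theorem LipschitzWith.finset_sum {ι E : Type*} [SeminormedAddCommGroup E] (s : Finset ι)
    {f : ι → α → E} {K : ι → NNReal} (hf : ∀ i ∈ s, LipschitzWith (K i) (f i)) :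
    LipschitzWith (∑ i ∈ s, K i) fun a => ∑ i ∈ s, f i a := by
  classical
  induction s using Finset.induction_on with
  | empty => simpa using LipschitzWith.const (0 : E)
  | insert i s hi ih =>
    simp only [Finset.sum_insert hi]
    exact (hf i (Finset.mem_insert_self i s)).add
      (ih fun j hj => hf j (Finset.mem_insert_of_mem hj))

end Lipschitz

theorem HasDerivAt.eq_of_eventuallyLE {f g : ℝ → ℝ} {f' g' a : ℝ} (hf : HasDerivAt f f' a)
    (hg : HasDerivAt g g' a) (hle : f ≤ᶠ[𝓝 a] g) (heq : f a = g a) : f' = g' := by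
  have hmax : IsLocalMax (fun t => f t - g t) a := by
    filter_upwards [hle] with t ht
    rw [heq, sub_self]
    exact sub_nonpos.mpr ht
  exact sub_eq_zero.mp (hmax.hasDerivAt_eq_zero (hf.sub hg))

theorem HasGradientAt.comp_hasDerivAt {F : Type*} [NormedAddCommGroup F]
    [InnerProductSpace ℝ F] [CompleteSpace F] {f : F → ℝ} {f' : F} {w : ℝ → F} {w' : F} {t : ℝ}
    (hf : HasGradientAt f f' (w t)) (hw : HasDerivAt w w' t) :
    HasDerivAt (fun s => f (w s)) ⟪f', w'⟫ t :=
  (hasGradientAt_iff_hasFDerivAt.mp hf).comp_hasDerivAt t hw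

section Bellman

variable {Θ X U : Type*} [Fintype X]

noncomputable def bellmanError (γ : ℝ) (P : U → X → X → ℝ) (Q : Θ → X → U → ℝ)
    (θ : Θ) (x : X) (u : U) : ℝ :=
  -γ * ∑ x', P u x x' * (⨆ u', Q θ x' u') + Q θ x u

def policyBellmanError (γ : ℝ) (P : U → X → X → ℝ) (Q : Θ → X → U → ℝ) (φ : X → U)
    (θ : Θ) (x : X) (u : U) : ℝ :=
  -γ * ∑ x', P u x x' * Q θ x' (φ x') + Q θ x u

theorem bellmanError_le_policyBellmanError [Finite U] {γ : ℝ} (hγ : 0 ≤ γ)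
    {P : U → X → X → ℝ} (hP : ∀ u x x', 0 ≤ P u x x') (Q : Θ → X → U → ℝ) (φ : X → U)
    (θ : Θ) (x : X) (u : U) :
    bellmanError γ P Q θ x u ≤ policyBellmanError γ P Q φ θ x u := by
  have hsum : ∑ x', P u x x' * Q θ x' (φ x') ≤ ∑ x', P u x x' * ⨆ u', Q θ x' u' :=
    Finset.sum_le_sum fun x' _ => mul_le_mul_of_nonneg_left
      (le_ciSup (Set.finite_range _).bddAbove (φ x')) (hP u x x')
  unfold bellmanError policyBellmanError
  nlinarith

theorem bellmanError_eq_policyBellmanError {γ : ℝ} {P : U → X → X → ℝ}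
    {Q : Θ → X → U → ℝ} {φ : X → U} {θ : Θ} (hφ : ∀ x', Q θ x' (φ x') = ⨆ u', Q θ x' u')
    (x : X) (u : U) : bellmanError γ P Q θ x u = policyBellmanError γ P Q φ θ x u := by
  simp only [bellmanError, policyBellmanError, hφ]

theorem lipschitzWith_bellmanError [PseudoMetricSpace Θ] [Fintype U] [Nonempty U] (γ : ℝ)
    (P : U → X → X → ℝ) {Q : Θ → X → U → ℝ}
    (hQ : ∀ x u, ∃ K : NNReal, LipschitzWith K fun θ => Q θ x u) (x : X) (u : U) :
    ∃ K : NNReal, LipschitzWith K fun θ => bellmanError γ P Q θ x u := by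
  choose K hK using hQ
  set L := Finset.univ.sup fun p : X × U => K p.1 p.2
  have hL : ∀ x u, LipschitzWith L fun θ => Q θ x u := fun x u =>
    (hK x u).weaken (Finset.le_sup (f := fun p : X × U => K p.1 p.2) (Finset.mem_univ (x, u)))
  have hsum := LipschitzWith.finset_sum Finset.univ fun x' _ =>
    (lipschitzWith_smul (P u x x')).comp (LipschitzWith.ciSup (hL x'))
  exact ⟨_, ((lipschitzWith_smul (-γ)).comp hsum).add (hL x u)⟩

theorem hasGradientAt_policyBellmanError {F : Type*} [NormedAddCommGroup F]
    [InnerProductSpace ℝ F] [CompleteSpace F] (γ : ℝ) (P : U → X → X → ℝ)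
    {Q : F → X → U → ℝ} (φ : X → U) {θ : F}
    (hQ : ∀ x u, DifferentiableAt ℝ (fun θ => Q θ x u) θ) (x : X) (u : U) :
    HasGradientAt (fun θ => policyBellmanError γ P Q φ θ x u)
      ((-γ) • (∑ x', P u x x' • gradient (fun θ => Q θ x' (φ x')) θ)
        + gradient (fun θ => Q θ x u) θ) θ := by
  have hgrad : ∀ x u, HasFDerivAt (fun θ => Q θ x u)
      (InnerProductSpace.toDual ℝ F (gradient (fun θ => Q θ x u) θ) : F →L[ℝ] ℝ) θ :=
    fun x u => hasGradientAt_iff_hasFDerivAt.mp (hQ x u).hasGradientAt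
  rw [hasGradientAt_iff_hasFDerivAt]
  simp only [map_add, map_smul, map_sum]
  exact ((HasFDerivAt.fun_sum fun x' _ => (hgrad x' (φ x')).const_mul (P u x x')).const_mul
    (-γ)).add (hgrad x u)

end Bellman

theorem stmt_6_general (d : ℕ) (X U : Type) [Fintype X] [Fintype U] [Nonempty U]
    (γ : ℝ) (hγ : γ ∈ Set.Ioo (0 : ℝ) 1)
    (P : U → X → X → ℝ)
    (hPnonneg : ∀ u x x', 0 ≤ P u x x')
    (Q : EuclideanSpace ℝ (Fin d) → X → U → ℝ)
    (hQLip : ∀ x u, ∃ K : NNReal, LipschitzWith K (fun θ => Q θ x u))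
    (hQsmooth : ∀ x u, ContDiff ℝ 2 (fun θ => Q θ x u))
    (T : ℝ)
    (w : ℝ → EuclideanSpace ℝ (Fin d))
    (Kw : NNReal) (hw : LipschitzOnWith Kw w (Set.Icc 0 T)) :
    ∀ (x : X) (u : U),
      (∃ K : NNReal, LipschitzOnWith K
          (fun t => -γ * ∑ x', P u x x' * (⨆ u', Q (w t) x' u') + Q (w t) x u)
          (Set.Icc 0 T)) ∧
        (∀ t₀ : ℝ,
          DifferentiableAt ℝ
            (fun t => -γ * ∑ x', P u x x' * (⨆ u', Q (w t) x' u') + Q (w t) x u) t₀ →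
          DifferentiableAt ℝ w t₀ →
          ∀ φ : X → U, (∀ x', Q (w t₀) x' (φ x') = ⨆ u', Q (w t₀) x' u') →
            deriv (fun t => -γ * ∑ x', P u x x' * (⨆ u', Q (w t) x' u') + Q (w t) x u) t₀
              = ⟪(-γ) • (∑ x', P u x x' • gradient (fun θ => Q θ x' (φ x')) (w t₀))
                  + gradient (fun θ => Q θ x u) (w t₀), deriv w t₀⟫) := by
  intro x u
  refine ⟨?_, fun t₀ hς hwt₀ φ hφ => ?_⟩
  · obtain ⟨K, hK⟩ := lipschitzWith_bellmanError γ P hQLip x u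
    exact ⟨K * Kw, hK.comp_lipschitzOnWith hw⟩
  · have hQdiff : ∀ x u, DifferentiableAt ℝ (fun θ => Q θ x u) (w t₀) :=
      fun x u => (hQsmooth x u).differentiable (by norm_num) _
    have hmajorant := (hasGradientAt_policyBellmanError γ P φ hQdiff x u).comp_hasDerivAt
      hwt₀.hasDerivAt
    have hle : ∀ t, bellmanError γ P Q (w t) x u ≤ policyBellmanError γ P Q φ (w t) x u :=
      fun t => bellmanError_le_policyBellmanError hγ.1.le hPnonneg Q φ (w t) x u
    exact hς.hasDerivAt.deriv.trans <| hς.hasDerivAt.eq_of_eventuallyLE hmajorant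
      (Eventually.of_forall hle) (bellmanError_eq_policyBellmanError hφ x u)

/-- Finite state/input spaces `X, U`, discount `γ ∈ (0,1)`, transition
kernels `P u`, and `Q(θ,x,u)` globally Lipschitz and `C²` in `θ`.  With
`ς^θ(x,u) = −γ Σ_{x'} P u x x' · max_{u'} Q(θ,x',u') + Q(θ,x,u)` and `w : [0,T] → ℝ^d`
Lipschitz, the map `t ↦ ς^{w t}(x,u)` is Lipschitz on `[0,T]`, and at any point `t₀`
where it and `w` are differentiable its derivative equals
`[−γ Σ_{x'} P u x x' ∇_θ Q(w t₀, x', φ x') + ∇_θ Q(w t₀, x, u)] ⬝ w'(t₀)`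
for every `Q^{w t₀}`-greedy map `φ`. -/
theorem stmt_6 (d : ℕ) (X U : Type) [Fintype X] [Fintype U] [Nonempty X] [Nonempty U]
    (γ : ℝ) (hγ : γ ∈ Set.Ioo (0 : ℝ) 1)
    (P : U → X → X → ℝ)
    (hPnonneg : ∀ u x x', 0 ≤ P u x x')
    (hProw : ∀ u x, ∑ x', P u x x' = 1)
    (Q : EuclideanSpace ℝ (Fin d) → X → U → ℝ)
    (hQLip : ∀ x u, ∃ K : NNReal, LipschitzWith K (fun θ => Q θ x u))
    (hQsmooth : ∀ x u, ContDiff ℝ 2 (fun θ => Q θ x u))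
    (T : ℝ) (hT : 0 < T)
    (w : ℝ → EuclideanSpace ℝ (Fin d))
    (Kw : NNReal) (hw : LipschitzOnWith Kw w (Set.Icc 0 T)) :
    ∀ (x : X) (u : U),
      (∃ K : NNReal, LipschitzOnWith K
          (fun t => -γ * ∑ x', P u x x' * (⨆ u', Q (w t) x' u') + Q (w t) x u)
          (Set.Icc 0 T)) ∧
        (∀ t₀ : ℝ,
          DifferentiableAt ℝ
            (fun t => -γ * ∑ x', P u x x' * (⨆ u', Q (w t) x' u') + Q (w t) x u) t₀ →
          DifferentiableAt ℝ w t₀ →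
          ∀ φ : X → U, (∀ x', Q (w t₀) x' (φ x') = ⨆ u', Q (w t₀) x' u') →
            deriv (fun t => -γ * ∑ x', P u x x' * (⨆ u', Q (w t) x' u') + Q (w t) x u) t₀
              = ⟪(-γ) • (∑ x', P u x x' • gradient (fun θ => Q θ x' (φ x')) (w t₀))
                  + gradient (fun θ => Q θ x u) (w t₀), deriv w t₀⟫) :=
  stmt_6_general d X U γ hγ P hPnonneg Q hQLip hQsmooth T w Kw hw
end

section
/- Let U be a finite nonempty set, let g : ℝ^d × U → ℝ be twice continuously differentiable in its first argument for each u, let ζ : ℝ^d → ℝ^d be twice continuously differentiable with ζ_i(θ) ≥ 0 for every component i and every θ, define D(θ) = max_{u∈U} g(θ,u) and f(θ) = D(θ)·ζ(θ) ∈ ℝ^d, and let K ⊂ ℝ^d be compact. Then there exists b_T < ∞ such that for every θ ∈ K, every v ∈ ℝ^d with ‖v‖ ≤ 1, and every u* ∈ U with g(θ,u*) = D(θ), the component-wise inequality holds: f(θ + v) ≥ f(θ) + [ ζ(θ) ∇_θ g(θ,u*)ᵀ + D(θ) Dζ(θ) ] v − b_T ‖v‖² 𝟙, where 𝟙 ∈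 ℝ^d is the vector of all ones. -/
open scoped RealInnerProductSpace

/-! The maximum `D` dominates every branch, so `D(θ + v) ζᵢ(θ + v) ≥ g(θ + v, u*) ζᵢ(θ + v)`
because `ζᵢ ≥ 0`, while at `θ` the two agree since `u*` is a maximizer. The smooth product
`g(·, u*) ζᵢ` has a second-order Taylor remainder bounded by `M ‖v‖²` uniformly on the
compact set `K`, and its derivative is `ζᵢ ∇g(·, u*) + g(·, u*) Dζᵢ`. Finiteness of `U × Fin d`
gives one constant for all branches and components. -/

section TaylorRemainder

variable {E F : Type*} [NormedAddCommGroup E] [NormedSpace ℝ E]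
  [NormedAddCommGroup F] [NormedSpace ℝ F] {h : E → F}

theorem Convex.norm_sub_sub_fderiv_le {s : Set E} (hs : Convex ℝ s)
    (hd : ∀ z ∈ s, DifferentiableAt ℝ h z)
    (hd2 : ∀ z ∈ s, DifferentiableAt ℝ (fderiv ℝ h) z) {C : ℝ}
    (hC : ∀ z ∈ s, ‖fderiv ℝ (fderiv ℝ h) z‖ ≤ C) {x y : E} (hx : x ∈ s) (hy : y ∈ s) :
    ‖h y - h x - fderiv ℝ h x (y - x)‖ ≤ C * ‖y - x‖ ^ 2 := by
  have hC0 : 0 ≤ C := (norm_nonneg (fderiv ℝ (fderiv ℝ h) x)).trans (hC x hx)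
  have hseg : segment ℝ x y ⊆ s := hs.segment_subset hx hy
  have hlip : ∀ z ∈ segment ℝ x y, ‖fderiv ℝ h z - fderiv ℝ h x‖ ≤ C * ‖y - x‖ := by
    intro z hz
    calc ‖fderiv ℝ h z - fderiv ℝ h x‖ ≤ C * ‖z - x‖ :=
          hs.norm_image_sub_le_of_norm_fderiv_le hd2 hC hx (hseg hz)
      _ ≤ C * ‖y - x‖ := by
          gcongr
          exact norm_sub_le_of_mem_segment hz
  calc ‖h y - h x - fderiv ℝ h x (y - x)‖ ≤ C * ‖y - x‖ * ‖y - x‖ :=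
        (convex_segment x y).norm_image_sub_le_of_norm_fderiv_le'
          (fun z hz => hd z (hseg hz)) hlip (left_mem_segment ℝ x y) (right_mem_segment ℝ x y)
    _ = C * ‖y - x‖ ^ 2 := by ring

theorem ContDiff.exists_norm_sub_sub_fderiv_le [ProperSpace E] (hh : ContDiff ℝ 2 h)
    {K : Set E} (hK : IsCompact K) (r : ℝ) :
    ∃ M : ℝ, ∀ θ ∈ K, ∀ v : E, ‖v‖ ≤ r →
      ‖h (θ + v) - h θ - fderiv ℝ h θ v‖ ≤ M * ‖v‖ ^ 2 := by
  have hd1 : ContDiff ℝ 1 (fderiv ℝ h) := hh.fderiv_right le_rfl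
  obtain ⟨M, hM⟩ := (hK.cthickening (r := r)).exists_bound_of_continuousOn
    (hd1.continuous_fderiv one_ne_zero).continuousOn
  refine ⟨M, fun θ hθ v hv => ?_⟩
  have hball : Metric.closedBall θ r ⊆ Metric.cthickening r K :=
    Metric.closedBall_subset_cthickening hθ r
  have hθv : θ + v ∈ Metric.closedBall θ r := by
    simpa only [Metric.mem_closedBall, dist_self_add_left] using hv
  simpa only [add_sub_cancel_left] using (convex_closedBall θ r).norm_sub_sub_fderiv_le
    (fun z _ => hh.differentiable two_ne_zero z)
    (fun z _ => hd1.differentiable one_ne_zero z) (fun z hz => hM z (hball hz))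
    (Metric.mem_closedBall_self ((norm_nonneg v).trans hv)) hθv

end TaylorRemainder

theorem fderiv_euclideanSpace_apply {E : Type*} [NormedAddCommGroup E] [NormedSpace ℝ E]
    {ι : Type*} [Fintype ι] {Φ : E → EuclideanSpace ℝ ι} {x : E}
    (hΦ : DifferentiableAt ℝ Φ x) (i : ι) (v : E) :
    fderiv ℝ (fun y => Φ y i) x v = fderiv ℝ Φ x v i := by
  have hproj := ((EuclideanSpace.proj (𝕜 := ℝ) i).hasFDerivAt.comp x hΦ.hasFDerivAt).fderiv
  exact DFunLike.congr_fun hproj v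

/-- Let `U` be finite nonempty, `g : ℝ^d × U → ℝ` be `C²` in `θ`,
`ζ : ℝ^d → ℝ^d` be `C²` with nonnegative components, `D θ = max_u g θ u`,
`f θ = D θ • ζ θ`, and `K ⊂ ℝ^d` compact.  Then there is `b_T < ∞` such that for every
`θ ∈ K`, every `v` with `‖v‖ ≤ 1`, and every maximizer `u*` of `g θ ·`, componentwise
`f (θ+v) ≥ f θ + [ζ θ ∇_θ g(θ,u*)ᵀ + D θ · Dζ(θ)] v − b_T ‖v‖² 𝟙`. -/
theorem stmt_7 (d : ℕ) (U : Type) [Fintype U] [Nonempty U]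
    (g : EuclideanSpace ℝ (Fin d) → U → ℝ)
    (hg : ∀ u, ContDiff ℝ 2 (fun θ => g θ u))
    (ζ : EuclideanSpace ℝ (Fin d) → EuclideanSpace ℝ (Fin d))
    (hζ : ContDiff ℝ 2 ζ)
    (hζnonneg : ∀ θ (i : Fin d), 0 ≤ ζ θ i)
    (K : Set (EuclideanSpace ℝ (Fin d))) (hK : IsCompact K) :
    ∃ bT : ℝ, ∀ θ ∈ K, ∀ v : EuclideanSpace ℝ (Fin d), ‖v‖ ≤ 1 →
      ∀ ustar : U, g θ ustar = (⨆ u, g θ u) →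
        ∀ i : Fin d,
          (⨆ u, g (θ + v) u) * ζ (θ + v) i ≥
            (⨆ u, g θ u) * ζ θ i
              + (ζ θ i * ⟪gradient (fun θ' => g θ' ustar) θ, v⟫
                  + (⨆ u, g θ u) * (fderiv ℝ ζ θ v) i)
              - bT * ‖v‖ ^ 2 := by
  have hζi : ∀ i, ContDiff ℝ 2 (fun θ => ζ θ i) := fun i =>
    (EuclideanSpace.proj (𝕜 := ℝ) i).contDiff.comp hζ
  choose M hM using fun p : U × Fin d =>
    ((hg p.1).mul (hζi p.2)).exists_norm_sub_sub_fderiv_le hK 1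
  obtain ⟨bT, hbT⟩ := Finite.exists_le M
  refine ⟨bT, fun θ hθ v hv ustar hmax i => ?_⟩
  have hbranch : g (θ + v) ustar * ζ (θ + v) i ≤ (⨆ u, g (θ + v) u) * ζ (θ + v) i :=
    mul_le_mul_of_nonneg_right (le_ciSup (Set.finite_range _).bddAbove ustar) (hζnonneg _ i)
  have hderiv : fderiv ℝ (fun θ => g θ ustar * ζ θ i) θ v =
      ζ θ i * ⟪gradient (fun θ' => g θ' ustar) θ, v⟫ + g θ ustar * fderiv ℝ ζ θ v i := by
    rw [fderiv_fun_mul ((hg ustar).differentiable two_ne_zero θ)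
        ((hζi i).differentiable two_ne_zero θ), inner_gradient_left,
      ← fderiv_euclideanSpace_apply (hζ.differentiable two_ne_zero θ)]
    simp only [add_apply, smul_apply, smul_eq_mul]
    ring
  have htaylor := neg_le_of_abs_le (hM (ustar, i) θ hθ v hv)
  have hbound : M (ustar, i) * ‖v‖ ^ 2 ≤ bT * ‖v‖ ^ 2 :=
    mul_le_mul_of_nonneg_right (hbT _) (sq_nonneg _)
  dsimp only at htaylor
  rw [hderiv] at htaylor
  rw [← hmax]
  linarith
end

section
/- Fix ρ ∈ (1/2, 1), set β_i = i^{−ρ}, t_0 = 0, t_n = Σ_{i=1}^n β_i for n ≥ 1, and m(n) = min{ j ≥ 0 : t_j + ln(n) ≥ t_n }. Then there exists N_s ≥ 1 such that for all n ≥ N_s, m(n) + 1 ≥ ρ^{1/(1−ρ)} (n + 1). -/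
open Filter Topology

/-- `t_n = Σ_{i=1}^n i^{−ρ}`, with `t_0 = 0`. -/
noncomputable def tseq (ρ : ℝ) (n : ℕ) : ℝ := ∑ i ∈ Finset.range n, ((i : ℝ) + 1) ^ (-ρ)

/-- `m(n) = min { j ≥ 0 : t_j + ln n ≥ t_n }` (the set contains `j = n`). -/
noncomputable def mseq (ρ : ℝ) (n : ℕ) : ℕ :=
  sInf {j : ℕ | tseq ρ n ≤ tseq ρ j + Real.log n}

/-- Fix `ρ ∈ (1/2, 1)`.  Then there exists `N_s ≥ 1` such that for
all `n ≥ N_s`, `m(n) + 1 ≥ ρ^{1/(1−ρ)} (n + 1)`. -/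
theorem stmt_10 (ρ : ℝ) (hρ : ρ ∈ Set.Ioo (1/2 : ℝ) 1) :
    ∃ Ns : ℕ, 1 ≤ Ns ∧ ∀ n : ℕ, Ns ≤ n →
      ρ ^ ((1 : ℝ) / (1 - ρ)) * ((n : ℝ) + 1) ≤ (mseq ρ n : ℝ) + 1 := by
  obtain ⟨hρ0, hρ1⟩ := hρ
  have hρpos : 0 < ρ := by linarith
  have h1ρ : 0 < 1 - ρ := by linarith
  set c : ℝ := ρ ^ ((1 : ℝ) / (1 - ρ)) with hc
  have hc1 : c < 1 := Real.rpow_lt_one hρpos.le hρ1 (by positivity)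
  have hc0 : 0 < c := Real.rpow_pos_of_pos hρpos _
  set ε : ℝ := (1 - ρ) / 2 with hεdef
  have hε : 0 < ε := by positivity
  set δ : ℝ := (1 - c) * ε with hδdef
  have hδ : 0 < δ := mul_pos (by linarith) hε
  have hexp : ρ + ε - 1 = -((1 - ρ) / 2) := by rw [hεdef]; ring
  have hten : Filter.Tendsto (fun n : ℕ => (n : ℝ) ^ (ρ + ε - 1)) Filter.atTop (nhds 0) := by
    rw [show (fun n : ℕ => (n : ℝ) ^ (ρ + ε - 1))
        = (fun x : ℝ => x ^ (-((1 - ρ) / 2))) ∘ (fun n : ℕ => (n : ℝ)) by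
      funext n; simp [hexp]]
    exact (tendsto_rpow_neg_atTop (by positivity)).comp tendsto_natCast_atTop_atTop
  have hev : ∀ᶠ n : ℕ in Filter.atTop, (n : ℝ) ^ (ρ + ε - 1) < δ :=
    hten.eventually_lt_const hδ
  obtain ⟨N, hN⟩ := Filter.eventually_atTop.mp hev
  refine ⟨max N 1, le_max_right _ _, ?_⟩
  intro n hn
  have hn1 : 1 ≤ n := le_trans (le_max_right N 1) hn
  have hnN : N ≤ n := le_trans (le_max_left N 1) hn
  have hnR : (1 : ℝ) ≤ (n : ℝ) := by exact_mod_cast hn1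
  have hnpos : (0 : ℝ) < n := by linarith
  have hmem : n ∈ {j : ℕ | tseq ρ n ≤ tseq ρ j + Real.log n} := by
    simp only [Set.mem_setOf_eq]
    have : 0 ≤ Real.log n := Real.log_nonneg hnR
    linarith
  set m := mseq ρ n with hm
  have hmmem : tseq ρ n ≤ tseq ρ m + Real.log n := Nat.sInf_mem ⟨n, hmem⟩
  have hmn : m ≤ n := Nat.sInf_le hmem
  have hmnR : (m : ℝ) ≤ n := by exact_mod_cast hmn
  -- lower bound on tseq ρ n - tseq ρ m
  have hsum : ((n : ℝ) - m) * (n : ℝ) ^ (-ρ) ≤ tseq ρ n - tseq ρ m := by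
    have heq : tseq ρ n - tseq ρ m = ∑ i ∈ Finset.Ico m n, ((i : ℝ) + 1) ^ (-ρ) := by
      rw [tseq, tseq, Finset.sum_Ico_eq_sub _ hmn]
    rw [heq]
    calc ((n : ℝ) - m) * (n : ℝ) ^ (-ρ)
        = ((Finset.Ico m n).card : ℝ) * (n : ℝ) ^ (-ρ) := by
          rw [Nat.card_Ico, Nat.cast_sub hmn]
      _ ≤ ∑ i ∈ Finset.Ico m n, ((i : ℝ) + 1) ^ (-ρ) := by
          rw [← nsmul_eq_mul]
          refine Finset.card_nsmul_le_sum _ _ _ ?_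
          intro i hi
          have hi' : i < n := (Finset.mem_Ico.mp hi).2
          have h1 : (i : ℝ) + 1 ≤ n := by exact_mod_cast Nat.succ_le_of_lt hi'
          exact Real.rpow_le_rpow_of_nonpos (by positivity) h1 (by linarith)
  have hkey : ((n : ℝ) - m) * (n : ℝ) ^ (-ρ) ≤ Real.log n := by linarith
  have hnρpos : (0 : ℝ) < (n : ℝ) ^ (-ρ) := Real.rpow_pos_of_pos hnpos _
  have h2 : (n : ℝ) - m ≤ Real.log n * (n : ℝ) ^ ρ := by
    have := (le_div_iff₀ hnρpos).mpr hkey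
    rwa [Real.rpow_neg hnpos.le, div_inv_eq_mul] at this
  -- bound log n * n^ρ
  have hlog : Real.log n ≤ (n : ℝ) ^ ε / ε := Real.log_le_rpow_div hnpos.le hε
  have h3 : Real.log n * (n : ℝ) ^ ρ ≤ (n : ℝ) ^ (ρ + ε) / ε := by
    calc Real.log n * (n : ℝ) ^ ρ ≤ ((n : ℝ) ^ ε / ε) * (n : ℝ) ^ ρ :=
          mul_le_mul_of_nonneg_right hlog (by positivity)
      _ = (n : ℝ) ^ (ρ + ε) / ε := by
          rw [Real.rpow_add hnpos]; ring
  have h4 : (n : ℝ) ^ (ρ + ε) / ε ≤ (1 - c) * ((n : ℝ) + 1) := by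
    have h5 : (n : ℝ) ^ (ρ + ε) = (n : ℝ) ^ (ρ + ε - 1) * n := by
      rw [← Real.rpow_add_one hnpos.ne' (ρ + ε - 1)]; ring_nf
    have h6 : (n : ℝ) ^ (ρ + ε - 1) ≤ δ := (hN n hnN).le
    have h7 : (n : ℝ) ^ (ρ + ε) ≤ δ * n := by
      rw [h5]; exact mul_le_mul_of_nonneg_right h6 hnpos.le
    rw [div_le_iff₀ hε]
    calc (n : ℝ) ^ (ρ + ε) ≤ δ * n := h7
      _ = (1 - c) * n * ε := by rw [hδdef]; ring
      _ ≤ (1 - c) * ((n : ℝ) + 1) * ε := by nlinarith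
  have hfinal : (n : ℝ) - m ≤ (1 - c) * ((n : ℝ) + 1) := by linarith
  linarith
end

section
/- Fix ρ ∈ (1/2, 1), set β_i = i^{−ρ}, t_0 = 0, t_n = Σ_{i=1}^n β_i for n ≥ 1, and m(n) = min{ j ≥ 0 : t_j + ln(n) ≥ t_n }. Let (θ_n)_{n≥0} be a sequence in ℝ^d and b_f < ∞ a constant such that ‖θ_i − θ_{i−1}‖ ≤ b_f / i for all i ≥ 1. Then lim_{n→∞} max_{m(n) ≤ k ≤ n} ‖θ_k − θ_n‖ = 0. -/
open Filter Topology

/-- Fix `ρ ∈ (1/2, 1)` and let `(θ_n)` be a sequence in `ℝ^d` with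
`‖θ_i − θ_{i−1}‖ ≤ b_f / i` for all `i ≥ 1`.  Then
`lim_{n→∞} max_{m(n) ≤ k ≤ n} ‖θ_k − θ_n‖ = 0`. -/
theorem stmt_11 (ρ : ℝ) (hρ : ρ ∈ Set.Ioo (1/2 : ℝ) 1) (d : ℕ)
    (θ : ℕ → EuclideanSpace ℝ (Fin d)) (bf : ℝ)
    (hθ : ∀ i : ℕ, 1 ≤ i → ‖θ i - θ (i - 1)‖ ≤ bf / (i : ℝ)) :
    ∀ ε : ℝ, 0 < ε → ∃ N : ℕ, ∀ n : ℕ, N ≤ n →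
      ∀ k : ℕ, mseq ρ n ≤ k → k ≤ n → ‖θ k - θ n‖ < ε := by
  obtain ⟨hρ1, hρ2⟩ := hρ
  have hbf : 0 ≤ bf := le_trans (norm_nonneg _) (by simpa using hθ 1 le_rfl)
  -- telescoping bound
  have tele : ∀ k n : ℕ, k ≤ n → ‖θ k - θ n‖ ≤ bf * (n - k) / (k + 1) := by
    intro k n hkn
    have h1 : θ n - θ k = ∑ i ∈ Finset.Ico k n, (θ (i + 1) - θ i) := by
      rw [Finset.sum_Ico_eq_sub _ hkn, Finset.sum_range_sub, Finset.sum_range_sub]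
      abel
    have h2 : ‖θ k - θ n‖ = ‖θ n - θ k‖ := norm_sub_rev _ _
    rw [h2, h1]
    calc ‖∑ i ∈ Finset.Ico k n, (θ (i + 1) - θ i)‖
        ≤ ∑ i ∈ Finset.Ico k n, ‖θ (i + 1) - θ i‖ := norm_sum_le _ _
      _ ≤ ∑ i ∈ Finset.Ico k n, bf / (k + 1) := by
          apply Finset.sum_le_sum
          intro i hi
          obtain ⟨hki, hin⟩ := Finset.mem_Ico.mp hi
          have := hθ (i + 1) (Nat.le_add_left 1 i)
          simp only [Nat.add_sub_cancel] at this
          refine this.trans ?_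
          apply div_le_div_of_nonneg_left hbf (by positivity)
          push_cast; linarith [(Nat.cast_le (α := ℝ)).mpr hki]
      _ = (n - k : ℕ) * (bf / (k + 1)) := by
          rw [Finset.sum_const, Nat.card_Ico, nsmul_eq_mul]
      _ ≤ bf * (n - k) / (k + 1) := by
          rw [Nat.cast_sub hkn]; ring_nf; rfl
  -- members of the defining set of mseq are close to n
  have Sbound : ∀ n j : ℕ, 1 ≤ n → tseq ρ n ≤ tseq ρ j + Real.log n →
      (n : ℝ) - j ≤ (n : ℝ) ^ ρ * Real.log n := by
    intro n j hn hj
    have hn0 : (0 : ℝ) < n := by exact_mod_cast hn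
    have hlogn : 0 ≤ Real.log n := Real.log_nonneg (by exact_mod_cast hn)
    rcases le_or_gt n j with h | h
    · have : (n : ℝ) - j ≤ 0 := by
        have : (n : ℝ) ≤ j := by exact_mod_cast h
        linarith
      exact this.trans (by positivity)
    · have hjn : j ≤ n := h.le
      have hsum : tseq ρ n - tseq ρ j = ∑ i ∈ Finset.Ico j n, ((i : ℝ) + 1) ^ (-ρ) := by
        rw [tseq, tseq, Finset.sum_Ico_eq_sub _ hjn]
      have hterm : ∀ i ∈ Finset.Ico j n, (n : ℝ) ^ (-ρ) ≤ ((i : ℝ) + 1) ^ (-ρ) := by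
        intro i hi
        obtain ⟨_, hin⟩ := Finset.mem_Ico.mp hi
        apply Real.rpow_le_rpow_of_nonpos (by positivity) ?_ (by linarith)
        have : (i : ℝ) + 1 ≤ n := by exact_mod_cast Nat.succ_le_of_lt hin
        exact this
      have hlb : ((n - j : ℕ) : ℝ) * (n : ℝ) ^ (-ρ) ≤ tseq ρ n - tseq ρ j := by
        rw [hsum]
        have := Finset.card_nsmul_le_sum (Finset.Ico j n)
          (fun i => ((i : ℝ) + 1) ^ (-ρ)) ((n : ℝ) ^ (-ρ)) hterm
        rwa [Nat.card_Ico, nsmul_eq_mul] at this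
      have h1 : ((n - j : ℕ) : ℝ) * (n : ℝ) ^ (-ρ) ≤ Real.log n := by
        refine hlb.trans ?_; linarith
      have hpos : (0 : ℝ) < (n : ℝ) ^ ρ := by positivity
      have h2 : ((n - j : ℕ) : ℝ) ≤ (n : ℝ) ^ ρ * Real.log n := by
        have h3 := mul_le_mul_of_nonneg_left h1 hpos.le
        rw [← mul_assoc, mul_comm ((n:ℝ)^ρ) _, mul_assoc,
          ← Real.rpow_add hn0] at h3
        simpa using h3
      rw [Nat.cast_sub hjn] at h2
      exact h2
  -- the limit of log n / n^(1-ρ)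
  have hlim : Tendsto (fun n : ℕ => Real.log n / (n : ℝ) ^ (1 - ρ)) atTop (𝓝 0) :=
    ((isLittleO_log_rpow_atTop (by linarith : (0:ℝ) < 1 - ρ)).tendsto_div_nhds_zero).comp
      tendsto_natCast_atTop_atTop
  intro ε hε
  have hε' : 0 < min (1/2 : ℝ) (ε / (2 * (bf + 1))) := by positivity
  obtain ⟨N₀, hN₀⟩ := (Metric.tendsto_atTop.mp hlim) _ hε'
  refine ⟨max N₀ 1, fun n hn k hmk hkn => ?_⟩
  have hn1 : 1 ≤ n := le_trans (le_max_right _ _) hn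
  have hnN₀ : N₀ ≤ n := le_trans (le_max_left _ _) hn
  have hn0 : (0 : ℝ) < n := by exact_mod_cast hn1
  have hlogn : 0 ≤ Real.log n := Real.log_nonneg (by exact_mod_cast hn1)
  set g : ℝ := Real.log n / (n : ℝ) ^ (1 - ρ) with hg
  have hgnn : 0 ≤ g := by positivity
  have hgsmall : g < min (1/2 : ℝ) (ε / (2 * (bf + 1))) := by
    have := hN₀ n hnN₀
    rwa [Real.dist_eq, sub_zero, ← hg, abs_of_nonneg hgnn] at this
  -- relation: n^ρ * log n = n * g
  have hkey : (n : ℝ) ^ ρ * Real.log n = (n : ℝ) * g := by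
    rw [hg, mul_div_assoc']
    rw [eq_div_iff (by positivity)]
    rw [mul_comm ((n:ℝ)^ρ) _, mul_assoc, ← Real.rpow_add hn0]
    norm_num
    ring
  -- mseq n is in the set
  have hmem : mseq ρ n ∈ {j : ℕ | tseq ρ n ≤ tseq ρ j + Real.log n} := by
    apply Nat.sInf_mem
    exact ⟨n, by simp only [Set.mem_setOf_eq]; linarith⟩
  have hclose : (n : ℝ) - mseq ρ n ≤ (n : ℝ) ^ ρ * Real.log n :=
    Sbound n (mseq ρ n) hn1 hmem
  have hkclose : (n : ℝ) - k ≤ (n : ℝ) * g := by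
    have : (mseq ρ n : ℝ) ≤ k := by exact_mod_cast hmk
    rw [← hkey]; linarith
  have hghalf : g ≤ 1 / 2 := le_of_lt (lt_of_lt_of_le hgsmall (min_le_left _ _))
  have hklb : (n : ℝ) / 2 ≤ (k : ℝ) + 1 := by
    have : (n : ℝ) * g ≤ n * (1/2) := by
      apply mul_le_mul_of_nonneg_left hghalf hn0.le
    nlinarith
  have hkn' : (k : ℝ) ≤ n := by exact_mod_cast hkn
  calc ‖θ k - θ n‖ ≤ bf * ((n : ℝ) - k) / (k + 1) := tele k n hkn
    _ ≤ bf * ((n : ℝ) * g) / ((n : ℝ) / 2) := by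
        apply div_le_div₀ (by positivity) ?_ (by positivity) hklb
        exact mul_le_mul_of_nonneg_left hkclose hbf
    _ = 2 * bf * g := by field_simp
    _ < ε := by
        have h1 : g < ε / (2 * (bf + 1)) :=
          lt_of_lt_of_le hgsmall (min_le_right _ _)
        have h2 : 2 * bf * g ≤ 2 * (bf + 1) * g := by nlinarith
        have h3 : 2 * (bf + 1) * g < 2 * (bf + 1) * (ε / (2 * (bf + 1))) := by
          apply mul_lt_mul_of_pos_left h1 (by linarith)
        have h4 : 2 * (bf + 1) * (ε / (2 * (bf + 1))) = ε := by
          field_simp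
        linarith
end

section
/- Let f̄ : ℝ^d → ℝ^d be globally Lipschitz, b_T ≥ 0, and suppose dist_N(Â, θ) = 0 for some Â ∈ ℝ^{d×d} and θ ∈ ℝ^d. Let v ∈ ℝ^d with ‖v‖ ≤ 1 and L ∈ ℝ^d be such that lim_{s↓0} (f̄(θ + s v) − f̄(θ))/s = L and lim_{s↓0} (f̄(θ − s v) − f̄(θ))/s = −L, i.e., the two-sided directional derivative of f̄ at θ along v exists and equals L. Then Âv = L. -/
/-!
Since `distN(Â, θ) = 0` and the supremum is over a bounded set, every `w` in the unit ball satisfies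
`[Âw - (f̄(θ+w) - f̄(θ))]_j ≤ b_T ‖w‖²`. Taking `w = s • v`, dividing by `s` and letting `s ↓ 0`
gives `[Âv]_j ≤ L_j`; the same argument along `-v` gives the reverse inequality.
-/

open Matrix Filter Topology

/-- `dist_N(Â, θ) = sup_{‖v‖≤1} ( max_{1≤i≤d} [ Âv − (f̄(θ+v) − f̄(θ)) ]_i − b_T ‖v‖² )`. -/
noncomputable def distN (d : ℕ)
    (fbar : EuclideanSpace ℝ (Fin d) → EuclideanSpace ℝ (Fin d)) (bT : ℝ)
    (Ahat : Matrix (Fin d) (Fin d) ℝ) (θ : EuclideanSpace ℝ (Fin d)) : ℝ :=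
  sSup {y : ℝ | ∃ v : EuclideanSpace ℝ (Fin d), ‖v‖ ≤ 1 ∧
    y = (⨆ i : Fin d, (Ahat.mulVec v i - (fbar (θ + v) i - fbar θ i))) - bT * ‖v‖ ^ 2}

section

variable {d : ℕ} {fbar : EuclideanSpace ℝ (Fin d) → EuclideanSpace ℝ (Fin d)} {bT : ℝ}
  {Ahat : Matrix (Fin d) (Fin d) ℝ} {θ : EuclideanSpace ℝ (Fin d)}

-- Without this, `sSup` would return the junk value `0` and `distN = 0` would carry no information.
lemma bddAbove_distN_set (hf : Continuous fbar) :
    BddAbove {y : ℝ | ∃ v : EuclideanSpace ℝ (Fin d), ‖v‖ ≤ 1 ∧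
      y = (⨆ i : Fin d, (Ahat.mulVec v i - (fbar (θ + v) i - fbar θ i))) - bT * ‖v‖ ^ 2} := by
  obtain ⟨C, hC⟩ :=
    (isCompact_closedBall (0 : EuclideanSpace ℝ (Fin d)) 1).exists_bound_of_continuousOn
    (f := fun u => Ahat *ᵥ u - ((fbar (θ + u)).ofLp - (fbar θ).ofLp)) (by
      refine Continuous.continuousOn ?_
      have hofLp := PiLp.continuous_ofLp 2 (fun _ : Fin d => ℝ)
      exact (continuous_const.matrix_mulVec hofLp).sub
        ((hofLp.comp (hf.comp (continuous_const.add continuous_id))).sub continuous_const))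
  refine ⟨max C 0 + |bT|, ?_⟩
  rintro _ ⟨u, hu, rfl⟩
  have hsup : (⨆ i : Fin d, (Ahat.mulVec u i - (fbar (θ + u) i - fbar θ i))) ≤ max C 0 :=
    Real.iSup_le (fun i => (le_abs_self _).trans <| (norm_le_pi_norm _ i).trans <|
      (hC u (by simpa using hu)).trans (le_max_left _ _)) (le_max_right _ _)
  have hquad : -(bT * ‖u‖ ^ 2) ≤ |bT| := by
    have : ‖u‖ ^ 2 ≤ 1 := pow_le_one₀ (norm_nonneg u) hu
    nlinarith [neg_abs_le bT, abs_nonneg bT, sq_nonneg ‖u‖]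
  linarith

lemma mulVec_apply_sub_le_of_distN_eq_zero (hf : Continuous fbar)
    (hdist : distN d fbar bT Ahat θ = 0) {w : EuclideanSpace ℝ (Fin d)} (hw : ‖w‖ ≤ 1)
    (j : Fin d) : Ahat.mulVec w j - (fbar (θ + w) j - fbar θ j) ≤ bT * ‖w‖ ^ 2 := by
  have hmem := le_csSup (bddAbove_distN_set (Ahat := Ahat) (θ := θ) (bT := bT) hf) ⟨w, hw, rfl⟩
  have hj := le_ciSup (Set.finite_range
    fun i : Fin d => Ahat.mulVec w i - (fbar (θ + w) i - fbar θ i)).bddAbove j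
  rw [← distN, hdist] at hmem
  linarith

-- The slack `bT * ‖s • v‖ ^ 2` is `o(s)`, so it disappears after dividing by `s`.
lemma mulVec_apply_le_of_tendsto {v L : EuclideanSpace ℝ (Fin d)}
    (hgap : ∀ w : EuclideanSpace ℝ (Fin d), ‖w‖ ≤ 1 → ∀ j : Fin d,
      Ahat.mulVec w j - (fbar (θ + w) j - fbar θ j) ≤ bT * ‖w‖ ^ 2)
    (hv : ‖v‖ ≤ 1)
    (hL : Tendsto (fun s : ℝ => s⁻¹ • (fbar (θ + s • v) - fbar θ)) (𝓝[>] 0) (𝓝 L))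
    (j : Fin d) : Ahat.mulVec v j ≤ L j := by
  have hcoord : Tendsto (fun s : ℝ => s⁻¹ * (fbar (θ + s • v) j - fbar θ j)) (𝓝[>] 0)
      (𝓝 (L j)) := by
    simpa [Function.comp_def] using ((PiLp.continuous_apply 2 _ j).tendsto L).comp hL
  have hquad : Tendsto (fun s : ℝ => bT * s * ‖v‖ ^ 2) (𝓝[>] 0) (𝓝 0) := by
    have : Continuous fun s : ℝ => bT * s * ‖v‖ ^ 2 := by fun_prop
    exact tendsto_nhdsWithin_of_tendsto_nhds (this.tendsto' 0 0 (by simp))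
  refine ge_of_tendsto (by simpa using hcoord.add hquad) ?_
  filter_upwards [Ioc_mem_nhdsGT zero_lt_one] with s ⟨hs0, hs1⟩
  have hsv : ‖s • v‖ = s * ‖v‖ := by rw [norm_smul, Real.norm_of_nonneg hs0.le]
  have := hgap (s • v) (by rw [hsv]; nlinarith [norm_nonneg v]) j
  rw [WithLp.ofLp_smul, Matrix.mulVec_smul, hsv] at this
  simp only [Pi.smul_apply, smul_eq_mul] at this
  rw [← sub_nonneg]
  have hdiff : s⁻¹ * (fbar (θ + s • v) j - fbar θ j) + bT * s * ‖v‖ ^ 2 - Ahat.mulVec v j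
      = s⁻¹ * (bT * (s * ‖v‖) ^ 2 - (s * Ahat.mulVec v j - (fbar (θ + s • v) j - fbar θ j))) := by
    field_simp
    ring
  rw [hdiff]
  exact mul_nonneg (inv_nonneg.2 hs0.le) (sub_nonneg.2 this)

end

theorem stmt_13_general (d : ℕ)
    (fbar : EuclideanSpace ℝ (Fin d) → EuclideanSpace ℝ (Fin d))
    (K : NNReal) (hLip : LipschitzWith K fbar)
    (bT : ℝ)
    (Ahat : Matrix (Fin d) (Fin d) ℝ) (θ : EuclideanSpace ℝ (Fin d))
    (hdist : distN d fbar bT Ahat θ = 0)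
    (v : EuclideanSpace ℝ (Fin d)) (hv : ‖v‖ ≤ 1)
    (L : EuclideanSpace ℝ (Fin d))
    (hpos : Tendsto (fun s : ℝ => s⁻¹ • (fbar (θ + s • v) - fbar θ))
      (nhdsWithin 0 (Set.Ioi 0)) (nhds L))
    (hneg : Tendsto (fun s : ℝ => s⁻¹ • (fbar (θ - s • v) - fbar θ))
      (nhdsWithin 0 (Set.Ioi 0)) (nhds (-L))) :
    ∀ i : Fin d, Ahat.mulVec v i = L i := by
  have hgap := fun w hw => mulVec_apply_sub_le_of_distN_eq_zero hLip.continuous hdist (w := w) hw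
  intro i
  have hle := mulVec_apply_le_of_tendsto hgap hv hpos i
  -- The backward limit is the forward one along `-v`.
  have hge := mulVec_apply_le_of_tendsto hgap (v := -v) (by rwa [norm_neg])
    (by simpa [← sub_eq_add_neg] using hneg) i
  simp only [WithLp.ofLp_neg, Matrix.mulVec_neg, Pi.neg_apply, PiLp.neg_apply] at hge
  linarith

/-- Let `f̄` be globally Lipschitz, `b_T ≥ 0`, and suppose
`dist_N(Â, θ) = 0`.  Let `v` with `‖v‖ ≤ 1` and `L ∈ ℝ^d` be such that the two-sided
directional derivative of `f̄` at `θ` along `v` exists and equals `L`, i.e.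
`lim_{s↓0} (f̄(θ + s v) − f̄(θ))/s = L` and `lim_{s↓0} (f̄(θ − s v) − f̄(θ))/s = −L`.
Then `Âv = L`. -/
theorem stmt_13 (d : ℕ) (hd : 0 < d)
    (fbar : EuclideanSpace ℝ (Fin d) → EuclideanSpace ℝ (Fin d))
    (K : NNReal) (hLip : LipschitzWith K fbar)
    (bT : ℝ) (hbT : 0 ≤ bT)
    (Ahat : Matrix (Fin d) (Fin d) ℝ) (θ : EuclideanSpace ℝ (Fin d))
    (hdist : distN d fbar bT Ahat θ = 0)
    (v : EuclideanSpace ℝ (Fin d)) (hv : ‖v‖ ≤ 1)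
    (L : EuclideanSpace ℝ (Fin d))
    (hpos : Tendsto (fun s : ℝ => s⁻¹ • (fbar (θ + s • v) - fbar θ))
      (nhdsWithin 0 (Set.Ioi 0)) (nhds L))
    (hneg : Tendsto (fun s : ℝ => s⁻¹ • (fbar (θ - s • v) - fbar θ))
      (nhdsWithin 0 (Set.Ioi 0)) (nhds (-L))) :
    ∀ i : Fin d, Ahat.mulVec v i = L i :=
  stmt_13_general d fbar K hLip bT Ahat θ hdist v hv L hpos hneg
end

section
/- Let A ∈ ℝ^{d×d} be invertible and let ε satisfy 0 < ε < λ_min(AᵀA), the smallest eigenvalue of the symmetric positive definite matrix AᵀA. Define G_ε = −(εI + AᵀA)⁻¹ Aᵀ. Then the matrix ½I + G_εA is symmetric and negative definite; in particular every eigenvalue of ½I + G_εA is real and strictly negative, so ½I + G_εA is Hurwitz. -/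
open Matrix

/-! With `S = AᵀA`, the matrix `½I + G_εA = ½I - (εI + S)⁻¹S` is `g(S)` for
`g(x) = ½ - x/(ε + x)` in the functional calculus of the symmetric matrix `S`. Hence it is
symmetric, and its eigenvalues (also over `ℂ`: its characteristic polynomial is
`∏ (X - g(λᵢ))`) are the numbers `g(λᵢ)`, which are negative since
`g(λ) = (ε - λ)/(2(ε + λ))` and `0 < ε < λᵢ`. -/

theorem transpose_mul_self_isHermitian (d : ℕ) (A : Matrix (Fin d) (Fin d) ℝ) :
    (Aᵀ * A).IsHermitian := by
  simpa [Matrix.conjTranspose_eq_transpose_of_trivial] using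
    Matrix.isHermitian_conjTranspose_mul_self A

lemma half_sub_div_add_neg {ε x : ℝ} (hε : 0 < ε) (hx : ε < x) : 2⁻¹ - x / (ε + x) < 0 := by
  rw [sub_neg, lt_div_iff₀ (by linarith)]
  linarith

section

variable {n 𝕜 : Type*} [Fintype n] [DecidableEq n] [RCLike 𝕜]

lemma cfc_half_sub_div_const_add {S : Matrix n n 𝕜} (hS : S.IsHermitian) {ε : ℝ}
    (hε : ∀ x ∈ spectrum ℝ S, ε + x ≠ 0) :
    cfc (fun x => 2⁻¹ - x / (ε + x)) S = (2 : ℝ)⁻¹ • (1 : Matrix n n 𝕜) - (ε • 1 + S)⁻¹ * S := by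
  have hcont : ContinuousOn (fun x => (ε + x)⁻¹) (spectrum ℝ S) :=
    (continuousOn_const.add continuousOn_id).inv₀ hε
  have hinv : cfc (fun x => (ε + x)⁻¹) S = (ε • 1 + S)⁻¹ := by
    rw [cfc_inv (fun x => ε + x) S hε, cfc_const_add ε (fun x => x) S, cfc_id' ℝ S,
      nonsing_inv_eq_ringInverse, Algebra.algebraMap_eq_smul_one]
  simp_rw [div_eq_inv_mul]
  rw [cfc_sub (fun _ => 2⁻¹) (fun x => (ε + x)⁻¹ * x) S (hg := hcont.mul continuousOn_id),
    cfc_const (2⁻¹ : ℝ) S, cfc_mul (fun x => (ε + x)⁻¹) (fun x => x) S hcont, cfc_id' ℝ S, hinv,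
    Algebra.algebraMap_eq_smul_one]

open scoped ComplexOrder in
lemma posDef_cfc {S : Matrix n n 𝕜} (hS : S.IsHermitian) {f : ℝ → ℝ}
    (hf : ∀ i, 0 < f (hS.eigenvalues i)) : (cfc f S).PosDef := by
  rw [hS.cfc_eq, IsHermitian.cfc, Unitary.conjStarAlgAut_apply,
    Unitary.isUnit_coe.posDef_star_right_conjugate_iff, posDef_diagonal_iff]
  simpa using hf

lemma spectrum_map_cfc {S : Matrix n n ℝ} (hS : S.IsHermitian) (f : ℝ → ℝ) :
    spectrum ℂ ((cfc f S).map (algebraMap ℝ ℂ)) =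
      Set.range fun i => (f (hS.eigenvalues i) : ℂ) := by
  ext μ
  rw [mem_spectrum_iff_isRoot_charpoly, charpoly_map, hS.charpoly_cfc_eq]
  simp [Finset.prod_eq_zero_iff, sub_eq_zero, eq_comm (a := μ)]

end

theorem stmt_15_general (d : ℕ) (A : Matrix (Fin d) (Fin d) ℝ)
    (ε : ℝ) (hε : 0 < ε)
    (hεlt : ∀ i : Fin d, ε < (transpose_mul_self_isHermitian d A).eigenvalues i) :
    ((2 : ℝ)⁻¹ • (1 : Matrix (Fin d) (Fin d) ℝ)
        + (-((ε • (1 : Matrix (Fin d) (Fin d) ℝ) + Aᵀ * A)⁻¹ * Aᵀ)) * A)ᵀ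
      = (2 : ℝ)⁻¹ • (1 : Matrix (Fin d) (Fin d) ℝ)
        + (-((ε • (1 : Matrix (Fin d) (Fin d) ℝ) + Aᵀ * A)⁻¹ * Aᵀ)) * A ∧
    (-((2 : ℝ)⁻¹ • (1 : Matrix (Fin d) (Fin d) ℝ)
        + (-((ε • (1 : Matrix (Fin d) (Fin d) ℝ) + Aᵀ * A)⁻¹ * Aᵀ)) * A)).PosDef ∧
    (∀ μ : ℂ, μ ∈ spectrum ℂ
        ((((2 : ℝ)⁻¹ • (1 : Matrix (Fin d) (Fin d) ℝ)
          + (-((ε • (1 : Matrix (Fin d) (Fin d) ℝ) + Aᵀ * A)⁻¹ * Aᵀ)) * A)).map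
          (algebraMap ℝ ℂ)) →
      μ.im = 0 ∧ μ.re < 0) := by
  set hS := transpose_mul_self_isHermitian d A
  set g : ℝ → ℝ := fun x => 2⁻¹ - x / (ε + x)
  have hg : ∀ i, g (hS.eigenvalues i) < 0 := fun i => half_sub_div_add_neg hε (hεlt i)
  have hM : (2 : ℝ)⁻¹ • (1 : Matrix (Fin d) (Fin d) ℝ)
      + (-((ε • (1 : Matrix (Fin d) (Fin d) ℝ) + Aᵀ * A)⁻¹ * Aᵀ)) * A = cfc g (Aᵀ * A) := by
    have hεS : ∀ x ∈ spectrum ℝ (Aᵀ * A), ε + x ≠ 0 := by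
      rw [hS.spectrum_real_eq_range_eigenvalues]
      rintro _ ⟨i, rfl⟩
      linarith [hεlt i]
    rw [cfc_half_sub_div_const_add hS hεS, neg_mul, Matrix.mul_assoc, sub_eq_add_neg]
  rw [hM]
  refine ⟨?_, ?_, ?_⟩
  · rw [← conjTranspose_eq_transpose_of_trivial]
    exact (cfc_predicate g (Aᵀ * A)).star_eq
  · rw [← cfc_neg]
    exact posDef_cfc hS fun i => neg_pos.mpr (hg i)
  · rw [spectrum_map_cfc hS]
    rintro _ ⟨i, rfl⟩
    exact ⟨Complex.ofReal_im _, hg i⟩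

/-- Let `A` be invertible and `0 < ε < λ_min(AᵀA)`.  With
`G_ε = −(εI + AᵀA)⁻¹ Aᵀ`, the matrix `½I + G_ε A` is symmetric and negative definite;
in particular every eigenvalue (over `ℂ`) is real and strictly negative, so `½I + G_ε A`
is Hurwitz. -/
theorem stmt_15 (d : ℕ) (A : Matrix (Fin d) (Fin d) ℝ) (hA : IsUnit A)
    (ε : ℝ) (hε : 0 < ε)
    (hεlt : ∀ i : Fin d, ε < (transpose_mul_self_isHermitian d A).eigenvalues i) :
    ((2 : ℝ)⁻¹ • (1 : Matrix (Fin d) (Fin d) ℝ)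
        + (-((ε • (1 : Matrix (Fin d) (Fin d) ℝ) + Aᵀ * A)⁻¹ * Aᵀ)) * A)ᵀ
      = (2 : ℝ)⁻¹ • (1 : Matrix (Fin d) (Fin d) ℝ)
        + (-((ε • (1 : Matrix (Fin d) (Fin d) ℝ) + Aᵀ * A)⁻¹ * Aᵀ)) * A ∧
    (-((2 : ℝ)⁻¹ • (1 : Matrix (Fin d) (Fin d) ℝ)
        + (-((ε • (1 : Matrix (Fin d) (Fin d) ℝ) + Aᵀ * A)⁻¹ * Aᵀ)) * A)).PosDef ∧
    (∀ μ : ℂ, μ ∈ spectrum ℂ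
        ((((2 : ℝ)⁻¹ • (1 : Matrix (Fin d) (Fin d) ℝ)
          + (-((ε • (1 : Matrix (Fin d) (Fin d) ℝ) + Aᵀ * A)⁻¹ * Aᵀ)) * A)).map
          (algebraMap ℝ ℂ)) →
      μ.im = 0 ∧ μ.re < 0) :=
  stmt_15_general d A ε hε hεlt
end

section
/- Let A ∈ ℝ^{d×d} be Hurwitz (hence invertible), let Σ_Δ ∈ ℝ^{d×d} be symmetric positive semi-definite, and for ε ∈ (0, λ_min(AᵀA)) let G_ε = −(εI + AᵀA)⁻¹Aᵀ and let Σ^ε be the unique solution of the Lyapunov equation (½I + G_εA)Σ^ε + Σ^ε(½I + G_εA)ᵀ + G_ε Σ_Δ G_εᵀ = 0. Define Σ* = A⁻¹ Σ_Δ (A⁻¹)ᵀ and Σ^{(2)} = (A AᵀA)⁻¹ Σ_Δ (AᵀA Aᵀ)⁻¹. Then there exist constants ε₀ > 0 and C < ∞ such that ‖Σ^ε − Σ* − ε² Σ^{(2)}‖ ≤ C ε³ for all 0 < ε < ε₀; that is, Σ^ε = Σ* + ε²Σ^{(2)} + O(ε³) as ε ↓ 0. -/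
/-!
Multiplying the Lyapunov equation on both sides by `P = εI + AᵀA` clears the gain
`G_ε = -P⁻¹Aᵀ` and leaves `AᵀA Σ^ε AᵀA - ε² Σ^ε = Aᵀ Σ_Δ A`, i.e. the fixed-point relation
`Σ^ε = Σ* + ε² K Σ^ε K` with `K = (AᵀA)⁻¹`. Since `Σ⁽²⁾ = K Σ* K`, substituting the relation into
itself gives `Σ^ε - Σ* - ε² Σ⁽²⁾ = ε⁴ K² Σ^ε K²`, and the same relation bounds `‖Σ^ε‖ ≤ 2‖Σ*‖`
as soon as `ε² ‖K‖² ≤ 1/2`.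
-/

open Matrix

open Filter Topology

attribute [local instance] Matrix.frobeniusSeminormedAddCommGroup Matrix.frobeniusNormedRing
  Matrix.frobeniusNormedSpace

theorem Matrix.norm_entry_le_frobenius_norm {m n α : Type*} [Fintype m] [Fintype n]
    [SeminormedAddCommGroup α] (A : Matrix m n α) (i : m) (j : n) : ‖A i j‖ ≤ ‖A‖ :=
  (PiLp.norm_apply_le (WithLp.toLp 2 (A i)) j).trans
    (PiLp.norm_apply_le (WithLp.toLp 2 fun i => WithLp.toLp 2 (A i)) i)

section FixedPoint

variable {R : Type*} [NonUnitalSeminormedRing R] {x a u v : R}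

theorem norm_le_two_mul_of_eq_add_mul_mul (h : x = a + u * x * v) (huv : ‖u‖ * ‖v‖ ≤ 1 / 2) :
    ‖x‖ ≤ 2 * ‖a‖ := by
  have : ‖x‖ ≤ ‖a‖ + ‖u‖ * ‖v‖ * ‖x‖ :=
    calc ‖x‖ = ‖a + u * x * v‖ := congrArg norm h
      _ ≤ ‖a‖ + ‖u * x * v‖ := norm_add_le _ _
      _ ≤ ‖a‖ + ‖u‖ * ‖x‖ * ‖v‖ := by gcongr; exact norm_mul₃_le
      _ = ‖a‖ + ‖u‖ * ‖v‖ * ‖x‖ := by ring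
  nlinarith [norm_nonneg x]

theorem norm_sub_sub_mul_mul_le_of_eq_add_mul_mul (h : x = a + u * x * v)
    (huv : ‖u‖ * ‖v‖ ≤ 1 / 2) : ‖x - a - u * a * v‖ ≤ 2 * (‖u‖ * ‖v‖) ^ 2 * ‖a‖ := by
  have hxa : x - a = u * x * v := sub_eq_iff_eq_add'.2 h
  have hexp : x - a - u * a * v = u * (u * x * v) * v :=
    calc x - a - u * a * v = u * x * v - u * a * v := by rw [hxa]
      _ = u * (x - a) * v := by noncomm_ring
      _ = u * (u * x * v) * v := by rw [hxa]
  calc ‖x - a - u * a * v‖ ≤ ‖u‖ * (‖u‖ * ‖x‖ * ‖v‖) * ‖v‖ := by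
        rw [hexp]
        exact norm_mul₃_le.trans (by gcongr; exact norm_mul₃_le)
    _ = (‖u‖ * ‖v‖) ^ 2 * ‖x‖ := by ring
    _ ≤ (‖u‖ * ‖v‖) ^ 2 * (2 * ‖a‖) := by
        gcongr; exact norm_le_two_mul_of_eq_add_mul_mul h huv
    _ = 2 * (‖u‖ * ‖v‖) ^ 2 * ‖a‖ := by ring

end FixedPoint

namespace Matrix

variable {n : Type*} [Fintype n] [DecidableEq n]

theorem isUnit_of_spectrum_re_neg {A : Matrix n n ℝ}
    (hA : ∀ μ : ℂ, μ ∈ spectrum ℂ (A.map (algebraMap ℝ ℂ)) → μ.re < 0) : IsUnit A := by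
  have hunit : IsUnit (A.map (algebraMap ℝ ℂ)) :=
    spectrum.isUnit_of_zero_notMem ℂ fun h => (hA 0 h).false
  rw [isUnit_iff_isUnit_det] at hunit ⊢
  have hdet : (A.map (algebraMap ℝ ℂ)).det = algebraMap ℝ ℂ A.det :=
    ((algebraMap ℝ ℂ).map_det A).symm
  rw [hdet] at hunit
  exact hunit.of_map

theorem posDef_transpose_mul_self {A : Matrix n n ℝ} (hA : IsUnit A) : (Aᵀ * A).PosDef := by
  simpa [conjTranspose_eq_transpose_of_trivial] using
    PosDef.conjTranspose_mul_self A (mulVec_injective_iff_isUnit.2 hA)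

noncomputable def lyapunovGain (ε : ℝ) (A : Matrix n n ℝ) : Matrix n n ℝ :=
  -((ε • (1 : Matrix n n ℝ) + Aᵀ * A)⁻¹ * Aᵀ)

def IsLyapunovSolution (ε : ℝ) (A Sd X : Matrix n n ℝ) : Prop :=
  ((2 : ℝ)⁻¹ • 1 + lyapunovGain ε A * A) * X + X * ((2 : ℝ)⁻¹ • 1 + lyapunovGain ε A * A)ᵀ
    + lyapunovGain ε A * Sd * (lyapunovGain ε A)ᵀ = 0

namespace IsLyapunovSolution

variable {A Sd X : Matrix n n ℝ} {ε : ℝ}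

theorem gram_mul_mul_gram_sub_smul (h : IsLyapunovSolution ε A Sd X)
    (hP : IsUnit (ε • 1 + Aᵀ * A)) :
    (Aᵀ * A) * X * (Aᵀ * A) - ε ^ 2 • X = Aᵀ * Sd * A := by
  rw [IsLyapunovSolution, lyapunovGain] at h
  set P := ε • (1 : Matrix n n ℝ) + Aᵀ * A with hPdef
  have hP' : IsUnit P.det := (isUnit_iff_isUnit_det P).1 hP
  have hS : Aᵀ * A = P - ε • 1 := by rw [hPdef]; abel
  have hBt : (P⁻¹)ᵀ = P⁻¹ := by rw [transpose_nonsing_inv]; simp [hPdef]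
  have hGA : -(P⁻¹ * Aᵀ) * A = ε • P⁻¹ - 1 := by
    rw [neg_mul, mul_assoc, hS, mul_sub, nonsing_inv_mul P hP', mul_smul_comm, mul_one, neg_sub]
  rw [hGA, transpose_add, transpose_sub, transpose_smul, transpose_smul, transpose_one, hBt,
    transpose_neg, transpose_mul, transpose_transpose, hBt] at h
  have hconj := congrArg (fun Y => P * Y * P) h
  simp only [mul_zero, zero_mul, mul_add, add_mul, mul_sub, sub_mul, smul_mul_assoc,
    mul_smul_comm, mul_neg, neg_mul, neg_neg, ← mul_assoc, mul_nonsing_inv P hP', one_mul,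
    mul_one, nonsing_inv_mul_cancel_right _ _ hP'] at hconj
  rw [hS]
  simp only [mul_sub, sub_mul, smul_mul_assoc, mul_smul_comm, one_mul, mul_one]
  linear_combination (norm := module) -hconj

theorem eq_add_smul_mul_mul (h : IsLyapunovSolution ε A Sd X) (hA : IsUnit A)
    (hP : IsUnit (ε • 1 + Aᵀ * A)) :
    X = A⁻¹ * Sd * (A⁻¹)ᵀ + (ε ^ 2 • (Aᵀ * A)⁻¹) * X * (Aᵀ * A)⁻¹ := by
  have hA' : IsUnit A.det := (isUnit_iff_isUnit_det A).1 hA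
  have hAt : IsUnit Aᵀ.det := by rwa [det_transpose]
  have hconj := congrArg (fun Y => (Aᵀ * A)⁻¹ * Y * (Aᵀ * A)⁻¹)
    (h.gram_mul_mul_gram_sub_smul hP)
  simp only [mul_inv_rev, mul_sub, sub_mul, smul_mul_assoc, mul_smul_comm, ← mul_assoc,
    nonsing_inv_mul_cancel_right _ _ hAt, mul_nonsing_inv_cancel_right _ _ hA',
    mul_nonsing_inv_cancel_right _ _ hAt, nonsing_inv_mul _ hA', one_mul] at hconj
  rw [mul_inv_rev, transpose_nonsing_inv]
  simp only [smul_mul_assoc, ← mul_assoc]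
  linear_combination (norm := module) hconj

theorem norm_sub_sub_le (h : IsLyapunovSolution ε A Sd X) (hA : IsUnit A)
    (hP : IsUnit (ε • 1 + Aᵀ * A)) (hε : ε ^ 2 * ‖(Aᵀ * A)⁻¹‖ ^ 2 ≤ 1 / 2) :
    ‖X - A⁻¹ * Sd * (A⁻¹)ᵀ - ε ^ 2 • ((A * Aᵀ * A)⁻¹ * Sd * (Aᵀ * A * Aᵀ)⁻¹)‖
      ≤ 2 * ‖(Aᵀ * A)⁻¹‖ ^ 4 * ‖A⁻¹ * Sd * (A⁻¹)ᵀ‖ * ε ^ 4 := by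
  set K := (Aᵀ * A)⁻¹
  set Sstar := A⁻¹ * Sd * (A⁻¹)ᵀ
  have hSig2 : (A * Aᵀ * A)⁻¹ * Sd * (Aᵀ * A * Aᵀ)⁻¹ = K * Sstar * K := by
    simp only [K, Sstar, Matrix.mul_inv_rev, transpose_nonsing_inv, mul_assoc]
  have hnorm : ‖ε ^ 2 • K‖ * ‖K‖ = ε ^ 2 * ‖K‖ ^ 2 := by
    rw [norm_smul, Real.norm_eq_abs, abs_of_nonneg (by positivity)]; ring
  rw [hSig2, ← smul_mul_assoc, ← smul_mul_assoc]
  calc _ ≤ 2 * (‖ε ^ 2 • K‖ * ‖K‖) ^ 2 * ‖Sstar‖ :=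
        norm_sub_sub_mul_mul_le_of_eq_add_mul_mul (h.eq_add_smul_mul_mul hA hP) (hnorm ▸ hε)
    _ = 2 * ‖K‖ ^ 4 * ‖Sstar‖ * ε ^ 4 := by rw [hnorm]; ring

end IsLyapunovSolution

end Matrix

theorem stmt_17_general (d : ℕ) (A : Matrix (Fin d) (Fin d) ℝ)
    (hHurwitz : ∀ μ : ℂ, μ ∈ spectrum ℂ (A.map (algebraMap ℝ ℂ)) → μ.re < 0)
    (Sd : Matrix (Fin d) (Fin d) ℝ)
    (Sig : ℝ → Matrix (Fin d) (Fin d) ℝ)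
    (hSig : ∀ ε : ℝ, 0 < ε →
      (∀ i : Fin d, ε < (transpose_mul_self_isHermitian d A).eigenvalues i) →
      ((2 : ℝ)⁻¹ • (1 : Matrix (Fin d) (Fin d) ℝ)
            + (-((ε • (1 : Matrix (Fin d) (Fin d) ℝ) + Aᵀ * A)⁻¹ * Aᵀ)) * A) * Sig ε
        + Sig ε * ((2 : ℝ)⁻¹ • (1 : Matrix (Fin d) (Fin d) ℝ)
            + (-((ε • (1 : Matrix (Fin d) (Fin d) ℝ) + Aᵀ * A)⁻¹ * Aᵀ)) * A)ᵀ
        + (-((ε • (1 : Matrix (Fin d) (Fin d) ℝ) + Aᵀ * A)⁻¹ * Aᵀ)) * Sd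
            * (-((ε • (1 : Matrix (Fin d) (Fin d) ℝ) + Aᵀ * A)⁻¹ * Aᵀ))ᵀ = 0) :
    ∃ ε₀ : ℝ, 0 < ε₀ ∧
      (∀ i : Fin d, ε₀ ≤ (transpose_mul_self_isHermitian d A).eigenvalues i) ∧
      ∃ C : ℝ, ∀ ε : ℝ, 0 < ε → ε < ε₀ → ∀ i j : Fin d,
        |(Sig ε - A⁻¹ * Sd * (A⁻¹)ᵀ
            - ε ^ 2 • ((A * Aᵀ * A)⁻¹ * Sd * (Aᵀ * A * Aᵀ)⁻¹)) i j| ≤ C * ε ^ 3 := by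
  have hA := isUnit_of_spectrum_re_neg hHurwitz
  have hS := posDef_transpose_mul_self hA
  set K := (Aᵀ * A)⁻¹
  have hSmall : ∀ᶠ ε in 𝓝 (0 : ℝ), (∀ i, ε < (transpose_mul_self_isHermitian d A).eigenvalues i)
      ∧ ε ≤ 1 ∧ ε ^ 2 * ‖K‖ ^ 2 ≤ 1 / 2 := by
    refine (eventually_all.2 fun i => eventually_lt_nhds (hS.eigenvalues_pos i)).and
      ((eventually_le_nhds one_pos).and ?_)
    have hlim : Tendsto (fun ε : ℝ => ε ^ 2 * ‖K‖ ^ 2) (𝓝 0) (𝓝 0) := by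
      simpa using (show Continuous fun ε : ℝ => ε ^ 2 * ‖K‖ ^ 2 by fun_prop).tendsto 0
    exact hlim.eventually (eventually_le_nhds (by norm_num))
  obtain ⟨δ, hδ, hδSmall⟩ := Metric.eventually_nhds_iff.1 hSmall
  have hε₀ : dist (δ / 2) 0 < δ := by rw [Real.dist_0_eq_abs, abs_of_pos (half_pos hδ)]; linarith
  refine ⟨δ / 2, half_pos hδ, fun i => ((hδSmall hε₀).1 i).le,
    2 * ‖K‖ ^ 4 * ‖A⁻¹ * Sd * (A⁻¹)ᵀ‖, fun ε hε hεδ i j => ?_⟩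
  obtain ⟨hεeig, hε1, hεK⟩ := hδSmall (show dist ε 0 < δ by
    rw [Real.dist_0_eq_abs, abs_of_pos hε]; linarith)
  have hP : IsUnit (ε • 1 + Aᵀ * A) :=
    ((PosDef.one.smul hε).add_posSemidef hS.posSemidef).isUnit
  calc _ ≤ _ := (Real.norm_eq_abs _).symm.trans_le (norm_entry_le_frobenius_norm _ i j)
    _ ≤ 2 * ‖K‖ ^ 4 * ‖A⁻¹ * Sd * (A⁻¹)ᵀ‖ * ε ^ 4 :=
        IsLyapunovSolution.norm_sub_sub_le (hSig ε hε hεeig) hA hP hεK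
    _ ≤ 2 * ‖K‖ ^ 4 * ‖A⁻¹ * Sd * (A⁻¹)ᵀ‖ * ε ^ 3 :=
        mul_le_mul_of_nonneg_left (pow_le_pow_of_le_one hε.le hε1 (by norm_num)) (by positivity)

/-- Let `A` be Hurwitz, `Σ_Δ` symmetric positive semidefinite, and for
`ε ∈ (0, λ_min(AᵀA))` let `G_ε = −(εI + AᵀA)⁻¹Aᵀ` and let `Σ^ε` solve
`(½I + G_εA)Σ^ε + Σ^ε(½I + G_εA)ᵀ + G_ε Σ_Δ G_εᵀ = 0`.  With
`Σ* = A⁻¹ Σ_Δ (A⁻¹)ᵀ` and `Σ⁽²⁾ = (A AᵀA)⁻¹ Σ_Δ (AᵀA Aᵀ)⁻¹`, there exist `ε₀ > 0`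
(with `ε₀ ≤ λ_min(AᵀA)`) and `C < ∞` such that `‖Σ^ε − Σ* − ε²Σ⁽²⁾‖ ≤ C ε³`
(entrywise) for all `0 < ε < ε₀`; that is, `Σ^ε = Σ* + ε²Σ⁽²⁾ + O(ε³)` as `ε ↓ 0`. -/
theorem stmt_17 (d : ℕ) (A : Matrix (Fin d) (Fin d) ℝ)
    (hHurwitz : ∀ μ : ℂ, μ ∈ spectrum ℂ (A.map (algebraMap ℝ ℂ)) → μ.re < 0)
    (Sd : Matrix (Fin d) (Fin d) ℝ) (hSd : Sd.PosSemidef)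
    (Sig : ℝ → Matrix (Fin d) (Fin d) ℝ)
    (hSig : ∀ ε : ℝ, 0 < ε →
      (∀ i : Fin d, ε < (transpose_mul_self_isHermitian d A).eigenvalues i) →
      ((2 : ℝ)⁻¹ • (1 : Matrix (Fin d) (Fin d) ℝ)
            + (-((ε • (1 : Matrix (Fin d) (Fin d) ℝ) + Aᵀ * A)⁻¹ * Aᵀ)) * A) * Sig ε
        + Sig ε * ((2 : ℝ)⁻¹ • (1 : Matrix (Fin d) (Fin d) ℝ)
            + (-((ε • (1 : Matrix (Fin d) (Fin d) ℝ) + Aᵀ * A)⁻¹ * Aᵀ)) * A)ᵀ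
        + (-((ε • (1 : Matrix (Fin d) (Fin d) ℝ) + Aᵀ * A)⁻¹ * Aᵀ)) * Sd
            * (-((ε • (1 : Matrix (Fin d) (Fin d) ℝ) + Aᵀ * A)⁻¹ * Aᵀ))ᵀ = 0) :
    ∃ ε₀ : ℝ, 0 < ε₀ ∧
      (∀ i : Fin d, ε₀ ≤ (transpose_mul_self_isHermitian d A).eigenvalues i) ∧
      ∃ C : ℝ, ∀ ε : ℝ, 0 < ε → ε < ε₀ → ∀ i j : Fin d,
        |(Sig ε - A⁻¹ * Sd * (A⁻¹)ᵀ
            - ε ^ 2 • ((A * Aᵀ * A)⁻¹ * Sd * (Aᵀ * A * Aᵀ)⁻¹)) i j| ≤ C * ε ^ 3 :=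
  stmt_17_general d A hHurwitz Sd Sig hSig
end

section
/- Let f : ℝ^d → ℝ^d be continuously differentiable and globally Lipschitz with Lipschitz constant b_L, let ε > 0 and T > 0, and let w : [0,T] → ℝ^d be a differentiable solution of the regularized Newton–Raphson flow d/dt w(t) = −[εI + A(w(t))ᵀA(w(t))]⁻¹ A(w(t))ᵀ f(w(t)), where A(θ) = Df(θ). Then for all t ∈ [0,T], ‖w(t)‖ ≤ [ ‖w(0)‖ + (b_L/ε) T ( ‖f(w(0))‖ + b_L ‖w(0)‖ ) ] · exp( b_L² T / ε ). In particular, the bound depends only on ‖w(0)‖, ‖f(w(0))‖, b_L, ε and T, uniformly over all such f with the same Lipschitz constant. -/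
open Matrix Filter

set_option maxHeartbeats 1000000 in
set_option synthInstance.maxHeartbeats 400000 in
open scoped RealInnerProductSpace in
lemma stmt_19_key {d : ℕ} {ε : ℝ} (hε : 0 < ε) (B : Matrix (Fin d) (Fin d) ℝ)
    (v : EuclideanSpace ℝ (Fin d)) :
    ‖Matrix.toEuclideanCLM (𝕜 := ℝ)
        ((ε • (1 : Matrix (Fin d) (Fin d) ℝ) + Bᵀ * B)⁻¹ * Bᵀ) v‖
      ≤ (1 / ε) * ‖Matrix.toEuclideanCLM (𝕜 := ℝ) B‖ * ‖v‖ := by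
  set e := Matrix.toEuclideanCLM (𝕜 := ℝ) (n := Fin d)
  set M : Matrix (Fin d) (Fin d) ℝ := ε • (1 : Matrix (Fin d) (Fin d) ℝ) + Bᵀ * B with hMdef
  have hBt : Bᵀ = star B := (Matrix.conjTranspose_eq_transpose_of_trivial B).symm
  have h1 : (ε • (1 : Matrix (Fin d) (Fin d) ℝ)).PosDef := by
    rw [Matrix.smul_one_eq_diagonal]
    exact Matrix.posDef_diagonal_iff.mpr fun _ => hε
  have hsemi : (Bᵀ * B).PosSemidef := by
    rw [hBt]; exact Matrix.posSemidef_conjTranspose_mul_self B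
  have hM : M.PosDef := h1.add_posSemidef hsemi
  have hMdet : IsUnit M.det := hM.det_pos.ne'.isUnit
  have hMinv : M * M⁻¹ = 1 := Matrix.mul_nonsing_inv _ hMdet
  -- lower bound for e M
  have lower : ∀ u : EuclideanSpace ℝ (Fin d), ε * ‖u‖ ≤ ‖e M u‖ := by
    intro u
    have hTu : e M u = ε • u + ContinuousLinearMap.adjoint (e B) (e B u) := by
      have hM' : e M = ε • (1 : EuclideanSpace ℝ (Fin d) →L[ℝ] EuclideanSpace ℝ (Fin d))
          + ContinuousLinearMap.adjoint (e B) * e B := by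
        rw [hMdef, map_add, _root_.map_smul, _root_.map_one, _root_.map_mul, hBt, map_star,
          ContinuousLinearMap.star_eq_adjoint]
      rw [hM']
      rfl
    have hinner : ⟪e M u, u⟫ = ε * ‖u‖ ^ 2 + ‖e B u‖ ^ 2 := by
      rw [hTu, inner_add_left, inner_smul_left, ContinuousLinearMap.adjoint_inner_left,
        real_inner_self_eq_norm_sq, real_inner_self_eq_norm_sq]
      simp
    have h1 : ε * ‖u‖ ^ 2 ≤ ⟪e M u, u⟫ := by
      rw [hinner]; nlinarith [sq_nonneg ‖e B u‖]
    have h2 : ⟪e M u, u⟫ ≤ ‖e M u‖ * ‖u‖ := real_inner_le_norm _ _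
    rcases eq_or_lt_of_le (norm_nonneg u) with h | h
    · rw [← h, mul_zero]
      positivity
    · have := h1.trans h2
      rw [pow_two, ← mul_assoc] at this
      exact le_of_mul_le_mul_right this h
  -- bound for e M⁻¹
  have invb : ∀ y : EuclideanSpace ℝ (Fin d), ‖e M⁻¹ y‖ ≤ (1 / ε) * ‖y‖ := by
    intro y
    have h1 : ε * ‖e M⁻¹ y‖ ≤ ‖e M (e M⁻¹ y)‖ := lower _
    have h2 : e M (e M⁻¹ y) = y := by
      have : e M * e M⁻¹ = 1 := by rw [← _root_.map_mul, hMinv, _root_.map_one]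
      calc e M (e M⁻¹ y) = (e M * e M⁻¹) y := rfl
        _ = y := by rw [this]; rfl
    rw [h2] at h1
    rw [div_mul_eq_mul_div, le_div_iff₀ hε, mul_comm]
    linarith
  have happ : e (M⁻¹ * Bᵀ) v = e M⁻¹ (e Bᵀ v) := by
    rw [_root_.map_mul]; rfl
  have hstar : ‖e Bᵀ‖ = ‖e B‖ := by
    rw [hBt, map_star]
    rw [ContinuousLinearMap.star_eq_adjoint]
    exact ContinuousLinearMap.adjoint.norm_map (e B)
  calc ‖e (M⁻¹ * Bᵀ) v‖ = ‖e M⁻¹ (e Bᵀ v)‖ := by rw [happ]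
    _ ≤ (1 / ε) * ‖e Bᵀ v‖ := invb _
    _ ≤ (1 / ε) * (‖e Bᵀ‖ * ‖v‖) := by
        have := (e Bᵀ).le_opNorm v
        have h1ε : (0 : ℝ) ≤ 1 / ε := by positivity
        exact mul_le_mul_of_nonneg_left this h1ε
    _ = (1 / ε) * ‖e B‖ * ‖v‖ := by rw [hstar, mul_assoc]

lemma stmt_19_gronwall_le {δ K c T t : ℝ} (hδ : 0 ≤ δ) (hK : 0 ≤ K) (hc : 0 ≤ c)
    (ht : 0 ≤ t) (htT : t ≤ T) :
    gronwallBound δ K c t ≤ (δ + c * T) * Real.exp (K * T) := by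
  have hT : 0 ≤ T := ht.trans htT
  have hexp1 : (1 : ℝ) ≤ Real.exp (K * T) := by
    rw [← Real.exp_zero]; exact Real.exp_le_exp.mpr (by positivity)
  rcases eq_or_lt_of_le hK with h | h
  · rw [gronwallBound, if_pos h.symm, ← h]
    simp only [zero_mul, Real.exp_zero, mul_one]
    nlinarith
  · rw [gronwallBound, if_neg h.ne']
    have hEt : Real.exp (K * t) ≤ Real.exp (K * T) :=
      Real.exp_le_exp.mpr (by nlinarith)
    have key : Real.exp (K * T) - 1 ≤ (K * T) * Real.exp (K * T) := by
      have h1 := Real.add_one_le_exp (-(K * T))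
      have h2 : Real.exp (K * T) * Real.exp (-(K * T)) = 1 := by
        rw [← Real.exp_add]; simp
      nlinarith [Real.exp_pos (K * T)]
    have hterm : c / K * (Real.exp (K * t) - 1) ≤ c * T * Real.exp (K * T) := by
      have step1 : c / K * (Real.exp (K * t) - 1) ≤ c / K * ((K * T) * Real.exp (K * T)) := by
        have : Real.exp (K * t) - 1 ≤ (K * T) * Real.exp (K * T) := by linarith
        have hcK : 0 ≤ c / K := by positivity
        exact mul_le_mul_of_nonneg_left this hcK
      have step2 : c / K * ((K * T) * Real.exp (K * T)) = c * T * Real.exp (K * T) := by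
        field_simp
      linarith
    have hδt : δ * Real.exp (K * t) ≤ δ * Real.exp (K * T) :=
      mul_le_mul_of_nonneg_left hEt hδ
    nlinarith [Real.exp_pos (K * T)]

/-- Let `f : ℝ^d → ℝ^d` be continuously differentiable and globally
Lipschitz with Lipschitz constant `b_L`, let `ε > 0`, `T > 0`, and let `w : [0,T] → ℝ^d`
be a differentiable solution of the regularized Newton–Raphson flow
`d/dt w(t) = −[εI + A(w(t))ᵀA(w(t))]⁻¹ A(w(t))ᵀ f(w(t))` with `A(θ) = Df(θ)`.
Then for all `t ∈ [0,T]`,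
`‖w t‖ ≤ (‖w 0‖ + (b_L/ε) T (‖f (w 0)‖ + b_L ‖w 0‖)) · exp(b_L² T / ε)`. -/
theorem stmt_19 (d : ℕ)
    (f : EuclideanSpace ℝ (Fin d) → EuclideanSpace ℝ (Fin d))
    (A : EuclideanSpace ℝ (Fin d) → Matrix (Fin d) (Fin d) ℝ)
    (hf : ∀ θ, HasFDerivAt f (Matrix.toEuclideanCLM (𝕜 := ℝ) (A θ)) θ)
    (hA : Continuous A)
    (bL : NNReal) (hLip : LipschitzWith bL f)
    (ε T : ℝ) (hε : 0 < ε) (hT : 0 < T)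
    (w : ℝ → EuclideanSpace ℝ (Fin d))
    (hw : ∀ t ∈ Set.Icc (0 : ℝ) T, HasDerivAt w
      (-(Matrix.toEuclideanCLM (𝕜 := ℝ)
          ((ε • (1 : Matrix (Fin d) (Fin d) ℝ) + (A (w t))ᵀ * A (w t))⁻¹ * (A (w t))ᵀ)
        (f (w t)))) t) :
    ∀ t ∈ Set.Icc (0 : ℝ) T,
      ‖w t‖ ≤ (‖w 0‖ + ((bL : ℝ) / ε) * T * (‖f (w 0)‖ + (bL : ℝ) * ‖w 0‖))
        * Real.exp ((bL : ℝ) ^ 2 * T / ε) := by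
  have hbL : (0 : ℝ) ≤ bL := bL.coe_nonneg
  set K : ℝ := (bL : ℝ) ^ 2 / ε with hKdef
  set c : ℝ := (bL : ℝ) / ε * (‖f (w 0)‖ + (bL : ℝ) * ‖w 0‖) with hcdef
  have hAnorm : ∀ θ, ‖Matrix.toEuclideanCLM (𝕜 := ℝ) (A θ)‖ ≤ (bL : ℝ) := fun θ =>
    (hf θ).le_of_lipschitz hLip
  have hc : 0 ≤ c := by
    have : (0 : ℝ) ≤ ‖f (w 0)‖ + (bL : ℝ) * ‖w 0‖ := by positivity
    positivity
  have hK : 0 ≤ K := by positivity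
  -- Grönwall
  have gron := norm_le_gronwallBound_of_norm_deriv_right_le (a := 0) (b := T)
    (f := w)
    (f' := fun t => -(Matrix.toEuclideanCLM (𝕜 := ℝ)
          ((ε • (1 : Matrix (Fin d) (Fin d) ℝ) + (A (w t))ᵀ * A (w t))⁻¹ * (A (w t))ᵀ)
        (f (w t))))
    (δ := ‖w 0‖) (K := K) (ε := c)
    (fun x hx => ((hw x hx).continuousAt).continuousWithinAt)
    (fun x hx => (hw x (Set.Ico_subset_Icc_self hx)).hasDerivWithinAt)
    le_rfl
    (by
      intro x hx
      rw [norm_neg]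
      have h1 := stmt_19_key hε (A (w x)) (f (w x))
      have h2 : (1 / ε) * ‖Matrix.toEuclideanCLM (𝕜 := ℝ) (A (w x))‖ * ‖f (w x)‖
          ≤ (1 / ε) * (bL : ℝ) * ‖f (w x)‖ := by
        gcongr
        exact hAnorm (w x)
      have h3 : ‖f (w x)‖ ≤ (bL : ℝ) * (‖w x‖ + ‖w 0‖) + ‖f (w 0)‖ := by
        have hl : ‖f (w x) - f (w 0)‖ ≤ (bL : ℝ) * ‖w x - w 0‖ := by
          simpa [dist_eq_norm] using hLip.dist_le_mul (w x) (w 0)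
        have htri := norm_sub_norm_le (f (w x)) (f (w 0))
        have htri2 : ‖w x - w 0‖ ≤ ‖w x‖ + ‖w 0‖ := norm_sub_le _ _
        nlinarith
      have h4 : (1 / ε) * (bL : ℝ) * ((bL : ℝ) * (‖w x‖ + ‖w 0‖) + ‖f (w 0)‖)
          = K * ‖w x‖ + c := by
        rw [hKdef, hcdef]; field_simp; ring
      have h5 : (1 / ε) * (bL : ℝ) * ‖f (w x)‖
          ≤ (1 / ε) * (bL : ℝ) * ((bL : ℝ) * (‖w x‖ + ‖w 0‖) + ‖f (w 0)‖) := by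
        have h1ε : (0 : ℝ) ≤ 1 / ε * (bL : ℝ) := by positivity
        exact mul_le_mul_of_nonneg_left h3 h1ε
      linarith)
  intro t ht
  have hb := gron t ht
  rw [sub_zero] at hb
  have hfinal : gronwallBound ‖w 0‖ K c t ≤ (‖w 0‖ + c * T) * Real.exp (K * T) :=
    stmt_19_gronwall_le (norm_nonneg _) hK hc ht.1 ht.2
  have heq : (‖w 0‖ + c * T) * Real.exp (K * T)
      = (‖w 0‖ + ((bL : ℝ) / ε) * T * (‖f (w 0)‖ + (bL : ℝ) * ‖w 0‖))
        * Real.exp ((bL : ℝ) ^ 2 * T / ε) := by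
    rw [hKdef, hcdef]
    ring_nf
  rw [heq] at hfinal
  linarith
end
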